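/- arXiv:math/9906171 — 7 statements merged into one kernel-verified Lean document; each statement's English description precedes it below -/
import Mathlib

section
/- Let V be a vector space of even dimension 2n over a field k with a hyperbolic quadratic form q. If L and W are Lagrangian subspaces (i.e., n-dimensional subspaces on which q vanishes identically) belonging to the same family of Lagrangians, then dim(L ∩ W) ≡ n (mod 2). -/
/-!
Let `B` be the polar form of `q`, so that a Lagrangian `L` satisfies `Lᗮ = L`. Given Lagrangians
`L, W, U`, let `P` be the space of pairs `(a, c) ∈ L × U` with `a + c ∈ W`, carrying the form
`β((a, c), (a', c')) = B(a, c')`. It is alternating, as `B(a, c) = q(a + c) - q(a) - q(c) = 0`,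
so its rank is even. Its kernel is the preimage under `(a, c) ↦ a` of
`(U ⊓ (L ⊔ W))ᗮ = U ⊔ L ⊓ W`, so its rank is `dim (L ⊓ (W ⊔ U)) - dim (L ⊓ (U ⊔ L ⊓ W))`, which
equals `n - dim (L ⊓ W) - dim (W ⊓ U) - dim (U ⊓ L) + 2 dim (L ⊓ W ⊓ U)`.
-/

open Module
open LinearMap (BilinForm)

namespace LinearMap.BilinForm

variable {k : Type*} [Field k]

theorem IsAlt.even_finrank_range {M : Type*} [AddCommGroup M] [Module k M]
    [FiniteDimensional k M] {B : BilinForm k M} (hB : B.IsAlt) :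
    Even (finrank k (range B)) := by
  induction hd : finrank k M using Nat.strong_induction_on generalizing M with
  | _ d ih =>
  by_cases hB0 : B = 0
  · rw [hB0, range_zero, finrank_bot]
    exact .zero
  obtain ⟨v, y, hvy⟩ : ∃ v y, B v y ≠ 0 := by
    by_contra! h
    exact hB0 (LinearMap.ext₂ h)
  set w := (B v y)⁻¹ • y
  have hvw : B v w = 1 := by simp [w, inv_mul_cancel₀ hvy]
  have hwv : B w v = -1 := by rw [← LinearMap.IsAlt.neg hB v w, hvw]
  -- `K` complements the hyperbolic plane spanned by `v, w`; restricting `B` to it keeps the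
  -- kernel and lowers the rank by two.
  set K := ker (B v) ⊓ ker (B w) with hKdef
  have hK : finrank k K + 2 = d := by
    have hsurj : range ((B v).prod (B w)) = ⊤ := by
      refine range_eq_top.mpr fun ⟨a, b⟩ => ⟨-b • v + a • w, ?_⟩
      simp [hvw, hwv, hB v, hB w]
    have := finrank_range_add_finrank_ker ((B v).prod (B w))
    rw [hsurj, ker_prod, ← hKdef, finrank_top, finrank_prod, finrank_self] at this
    omega
  have hcodisj : Codisjoint K (Submodule.span k {v, w}) := by
    refine Submodule.codisjoint_iff_exists_add_eq.mpr fun x =>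
      ⟨x + B w x • v - B v x • w, - B w x • v + B v x • w, ?_,
        Submodule.mem_span_pair.mpr ⟨_, _, rfl⟩, by module⟩
    simp [K, hvw, hwv, hB v, hB w]
  have horth : ∀ x ∈ K, ∀ z ∈ Submodule.span k {v, w}, B x z = 0 := by
    rintro x ⟨hxv, hxw⟩ z hz
    obtain ⟨a, b, rfl⟩ := Submodule.mem_span_pair.mp hz
    simp only [map_add, map_smul, hB.eq_iff.mp hxv, hB.eq_iff.mp hxw, smul_zero, add_zero]
  have hker : finrank k (ker (B.restrict K)) = finrank k (ker B) := by
    rw [ker_restrict_eq_of_codisjoint hcodisj horth]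
    refine (Submodule.comapSubtypeEquivOfLe fun x hx => ?_).finrank_eq
    exact ⟨hB.eq_iff.mp (LinearMap.congr_fun hx v), hB.eq_iff.mp (LinearMap.congr_fun hx w)⟩
  have h₁ := finrank_range_add_finrank_ker (B.restrict K)
  have h₂ := finrank_range_add_finrank_ker B
  rw [hker] at h₁
  obtain ⟨m, hm⟩ := ih (finrank k K) (by omega) (B := B.restrict K) (fun x => hB x) rfl
  exact ⟨m + 1, by omega⟩

theorem orthogonal_sup {M : Type*} [AddCommGroup M] [Module k M] (B : BilinForm k M)
    (X Y : Submodule k M) : B.orthogonal (X ⊔ Y) = B.orthogonal X ⊓ B.orthogonal Y :=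
  le_antisymm (le_inf (orthogonal_le le_sup_left) (orthogonal_le le_sup_right))
    fun m ⟨hX, hY⟩ n hn => by
      obtain ⟨x, hx, y, hy, rfl⟩ := Submodule.mem_sup.mp hn
      simp [hX x hx, hY y hy]

theorem orthogonal_inf {M : Type*} [AddCommGroup M] [Module k M] [FiniteDimensional k M]
    {B : BilinForm k M} (hB : B.Nondegenerate) (hB₀ : B.IsRefl) (X Y : Submodule k M) :
    B.orthogonal (X ⊓ Y) = B.orthogonal X ⊔ B.orthogonal Y := by
  conv_lhs => rw [← orthogonal_orthogonal hB hB₀ X, ← orthogonal_orthogonal hB hB₀ Y,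
    ← orthogonal_sup]
  exact orthogonal_orthogonal hB hB₀ _

theorem ker_compl₁₂_eq_comap_orthogonal {M P : Type*} [AddCommGroup M] [Module k M]
    [AddCommGroup P] [Module k P] {B : BilinForm k M} (hB : B.IsRefl) (f g : P →ₗ[k] M) :
    ker (B.compl₁₂ f g) = (B.orthogonal (range g)).comap f := by
  ext x
  simp only [mem_ker, Submodule.mem_comap, mem_orthogonal_iff, mem_range,
    forall_exists_index, forall_apply_eq_imp_iff, LinearMap.ext_iff, compl₁₂_apply]
  exact forall_congr' fun y => hB.eq_iff

end LinearMap.BilinForm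

theorem LinearMap.finrank_comap_add_finrank_range {k M N : Type*} [Field k] [AddCommGroup M]
    [Module k M] [AddCommGroup N] [Module k N] [FiniteDimensional k M] (g : M →ₗ[k] N)
    (X : Submodule k N) :
    finrank k (X.comap g) + finrank k (range g) = finrank k M + finrank k ↥(X ⊓ range g) := by
  have hker : finrank k (ker (g.domRestrict (X.comap g))) = finrank k (ker g) := by
    rw [ker_domRestrict]
    exact (Submodule.comapSubtypeEquivOfLe (ker_le_comap g)).finrank_eq
  have hrange : range (g.domRestrict (X.comap g)) = X ⊓ range g := by
    rw [range_domRestrict, Submodule.map_comap_eq, inf_comm]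
  have h₁ := finrank_range_add_finrank_ker (g.domRestrict (X.comap g))
  have h₂ := finrank_range_add_finrank_ker g
  rw [hker, hrange] at h₁
  omega

namespace Submodule

variable {k V : Type*} [Field k] [AddCommGroup V] [Module k V]

theorem finrank_sup_inf_add_finrank_inf_inf [FiniteDimensional k V] (A B C : Submodule k V) :
    finrank k ↥((C ⊔ A ⊓ B) ⊓ A) + finrank k ↥(A ⊓ B ⊓ C) =
      finrank k ↥(A ⊓ B) + finrank k ↥(C ⊓ A) := by
  have hinf : A ⊓ B ⊓ (C ⊓ A) = A ⊓ B ⊓ C := by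
    rw [inf_comm C A, inf_inf_inf_comm, inf_idem, inf_assoc]
  rw [sup_comm, sup_inf_assoc_of_le C inf_le_left, ← hinf]
  exact finrank_sup_add_finrank_inf_eq _ _

def pairsWithSumIn (L U W : Submodule k V) : Submodule k (V × V) :=
  L.prod U ⊓ W.comap (LinearMap.fst k V V + LinearMap.snd k V V)

variable {L U W : Submodule k V}

theorem mem_pairsWithSumIn {x : V × V} :
    x ∈ pairsWithSumIn L U W ↔ x.1 ∈ L ∧ x.2 ∈ U ∧ x.1 + x.2 ∈ W := by
  simp [pairsWithSumIn, and_assoc]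

theorem range_fst_comp_subtype_pairsWithSumIn :
    LinearMap.range (LinearMap.fst k V V ∘ₗ (pairsWithSumIn L U W).subtype) = L ⊓ (W ⊔ U) := by
  ext a
  simp only [LinearMap.mem_range, LinearMap.comp_apply, Subtype.exists, mem_pairsWithSumIn,
    Submodule.coe_subtype, LinearMap.fst_apply, Prod.exists, exists_prop, mem_inf, mem_sup]
  constructor
  · rintro ⟨a, c, ⟨ha, hc, hac⟩, rfl⟩
    exact ⟨ha, a + c, hac, -c, neg_mem hc, by abel⟩
  · rintro ⟨ha, w, hw, u, hu, rfl⟩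
    exact ⟨w + u, -u, ⟨ha, neg_mem hu, by simpa using hw⟩, rfl⟩

theorem range_snd_comp_subtype_pairsWithSumIn :
    LinearMap.range (LinearMap.snd k V V ∘ₗ (pairsWithSumIn L U W).subtype) = U ⊓ (L ⊔ W) := by
  ext c
  simp only [LinearMap.mem_range, LinearMap.comp_apply, Subtype.exists, mem_pairsWithSumIn,
    Submodule.coe_subtype, LinearMap.snd_apply, Prod.exists, exists_prop, mem_inf, mem_sup]
  constructor
  · rintro ⟨a, c, ⟨ha, hc, hac⟩, rfl⟩
    exact ⟨hc, -a, neg_mem ha, a + c, hac, by abel⟩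
  · rintro ⟨hc, a, ha, w, hw, rfl⟩
    exact ⟨-a, a + w, ⟨neg_mem ha, hc, by simpa using hw⟩, rfl⟩

end Submodule

namespace QuadraticMap

variable {k V : Type*} [Field k] [AddCommGroup V] [Module k V]

theorem polarBilin_isRefl (q : QuadraticForm k V) : (polarBilin q).IsRefl := fun x y h => by
  rwa [polarBilin_apply_apply, polar_comm, ← polarBilin_apply_apply]

theorem polarBilin_eq_zero_of_isotropic {q : QuadraticForm k V} {S : Submodule k V}
    (hS : ∀ x ∈ S, q x = 0) {x y : V} (hx : x ∈ S) (hy : y ∈ S) : polarBilin q x y = 0 := by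
  rw [polarBilin_apply_apply, polar, hS _ (S.add_mem hx hy), hS x hx, hS y hy, sub_zero,
    sub_zero]

def IsLagrangian (q : QuadraticForm k V) (L : Submodule k V) : Prop :=
  (∀ x ∈ L, q x = 0) ∧ 2 * finrank k L = finrank k V

section Lagrangian

variable [FiniteDimensional k V] {q : QuadraticForm k V} (hq : (polarBilin q).Nondegenerate)
  {L W U : Submodule k V}
include hq

theorem IsLagrangian.orthogonal_eq (hL : q.IsLagrangian L) :
    LinearMap.BilinForm.orthogonal (polarBilin q) L = L := by
  symm
  refine Submodule.eq_of_le_of_finrank_eq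
    (fun x hx y hy => polarBilin_eq_zero_of_isotropic hL.1 hy hx) ?_
  rw [LinearMap.BilinForm.finrank_orthogonal hq]
  have := hL.2
  omega

theorem IsLagrangian.finrank_inf_sup_add_finrank_inf (hL : q.IsLagrangian L)
    (hW : q.IsLagrangian W) (hU : q.IsLagrangian U) :
    finrank k ↥(L ⊓ (W ⊔ U)) + finrank k ↥(W ⊓ U) = finrank k L + finrank k ↥(L ⊓ W ⊓ U) := by
  have hperp : LinearMap.BilinForm.orthogonal (polarBilin q) (L ⊔ (W ⊔ U)) = L ⊓ W ⊓ U := by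
    rw [LinearMap.BilinForm.orthogonal_sup, LinearMap.BilinForm.orthogonal_sup,
      hL.orthogonal_eq hq, hW.orthogonal_eq hq, hU.orthogonal_eq hq, inf_assoc]
  have h₁ := LinearMap.BilinForm.finrank_orthogonal hq (L ⊔ (W ⊔ U))
  rw [hperp] at h₁
  have h₂ := Submodule.finrank_sup_add_finrank_inf_eq L (W ⊔ U)
  have h₃ := Submodule.finrank_sup_add_finrank_inf_eq W U
  have h₄ := Submodule.finrank_le (L ⊔ (W ⊔ U))
  have h₅ := Submodule.finrank_le (W ⊔ U)
  have := And.intro hL.2 (And.intro hW.2 hU.2)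
  omega

open LinearMap.BilinForm Submodule in
theorem IsLagrangian.finrank_inf_add_finrank_inf_add_finrank_inf_mod_two
    (hL : q.IsLagrangian L) (hW : q.IsLagrangian W) (hU : q.IsLagrangian U) :
    (finrank k ↥(L ⊓ W) + finrank k ↥(W ⊓ U) + finrank k ↥(U ⊓ L)) % 2 = finrank k L % 2 := by
  set P := pairsWithSumIn L U W
  set f := LinearMap.fst k V V ∘ₗ P.subtype
  set g := LinearMap.snd k V V ∘ₗ P.subtype
  set β : BilinForm k P := (polarBilin q).compl₁₂ f g
  have hβ : β.IsAlt := fun x => by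
    obtain ⟨ha, hc, hac⟩ := mem_pairsWithSumIn.mp x.2
    simp only [β, f, g, LinearMap.compl₁₂_apply, LinearMap.comp_apply, coe_subtype,
      LinearMap.fst_apply, LinearMap.snd_apply, polarBilin_apply_apply, polar, hW.1 _ hac,
      hL.1 _ ha, hU.1 _ hc, sub_zero]
  have hker : LinearMap.ker β = (U ⊔ L ⊓ W).comap f := by
    rw [ker_compl₁₂_eq_comap_orthogonal (polarBilin_isRefl q),
      range_snd_comp_subtype_pairsWithSumIn, orthogonal_inf hq (polarBilin_isRefl q),
      orthogonal_sup, hL.orthogonal_eq hq, hW.orthogonal_eq hq, hU.orthogonal_eq hq]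
  have hmeet : (U ⊔ L ⊓ W) ⊓ LinearMap.range f = (U ⊔ L ⊓ W) ⊓ L := by
    rw [range_fst_comp_subtype_pairsWithSumIn, ← inf_assoc, inf_eq_left]
    exact inf_le_left.trans (sup_le le_sup_right (inf_le_right.trans le_sup_left))
  obtain ⟨m, hm⟩ := hβ.even_finrank_range
  have h₁ := LinearMap.finrank_range_add_finrank_ker β
  have h₂ := LinearMap.finrank_comap_add_finrank_range f (U ⊔ L ⊓ W)
  have h₃ := hL.finrank_inf_sup_add_finrank_inf hq hW hU
  have h₄ := finrank_sup_inf_add_finrank_inf_inf L W U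
  rw [hker] at h₁
  rw [hmeet, range_fst_comp_subtype_pairsWithSumIn] at h₂
  omega

end Lagrangian

section Hyperbolic

variable {n : ℕ} {q : QuadraticForm k V} {e : Basis (Fin n ⊕ Fin n) k V}
  (hq : ∀ v, q v = ∑ i : Fin n, e.repr v (Sum.inl i) * e.repr v (Sum.inr i))
include hq

theorem polarBilin_eq_sum_of_hyperbolic (x y : V) :
    polarBilin q x y = ∑ i : Fin n, (e.repr x (Sum.inl i) * e.repr y (Sum.inr i) +
      e.repr y (Sum.inl i) * e.repr x (Sum.inr i)) := by
  rw [polarBilin_apply_apply, polar, hq, hq, hq, ← Finset.sum_sub_distrib,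
    ← Finset.sum_sub_distrib]
  refine Finset.sum_congr rfl fun i _ => ?_
  simp only [map_add, Finsupp.coe_add, Pi.add_apply]
  ring

theorem polarBilin_basis_inr_of_hyperbolic (x : V) (j : Fin n) :
    polarBilin q x (e (Sum.inr j)) = e.repr x (Sum.inl j) := by
  simp [polarBilin_eq_sum_of_hyperbolic hq, Finsupp.single_apply]

theorem polarBilin_basis_inl_of_hyperbolic (x : V) (j : Fin n) :
    polarBilin q x (e (Sum.inl j)) = e.repr x (Sum.inr j) := by
  simp [polarBilin_eq_sum_of_hyperbolic hq, Finsupp.single_apply]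

theorem nondegenerate_polarBilin_of_hyperbolic : (polarBilin q).Nondegenerate := by
  refine (LinearMap.IsRefl.nondegenerate_iff_separatingLeft (polarBilin_isRefl q)).mpr
    fun x hx => e.forall_coord_eq_zero_iff.mp fun i => ?_
  rcases i with j | j
  · simpa [polarBilin_basis_inr_of_hyperbolic hq] using hx (e (Sum.inr j))
  · simpa [polarBilin_basis_inl_of_hyperbolic hq] using hx (e (Sum.inl j))

end Hyperbolic
end QuadraticMap

/-- Let `V` be a `2n`-dimensional vector space over a field `k` with a
hyperbolic quadratic form `q` (expressed in a basis indexed by `Fin n ⊕ Fin n` as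
`q = ∑ xᵢ x_{n+i}`).  For Lagrangian subspaces, the parity of `dim (L ⊓ W)` is the same
as the parity of `n` when `L, W` are in the same family; concretely, for any three
Lagrangian subspaces `L, W, U` one has
`dim(L∩W) + dim(W∩U) + dim(U∩L) ≡ n (mod 2)`. -/
theorem stmt0 {k V : Type*} [Field k] [AddCommGroup V] [Module k V]
    [FiniteDimensional k V] (n : ℕ) (q : QuadraticForm k V)
    (e : Basis (Fin n ⊕ Fin n) k V)
    (hq : ∀ v, q v = ∑ i : Fin n, e.repr v (Sum.inl i) * e.repr v (Sum.inr i))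
    (L W U : Submodule k V)
    (hL : finrank k L = n ∧ ∀ x ∈ L, q x = 0)
    (hW : finrank k W = n ∧ ∀ x ∈ W, q x = 0)
    (hU : finrank k U = n ∧ ∀ x ∈ U, q x = 0) :
    (finrank k ↥(L ⊓ W) + finrank k ↥(W ⊓ U) + finrank k ↥(U ⊓ L)) % 2 = n % 2 := by
  have hdim : finrank k V = 2 * n := by
    rw [finrank_eq_card_basis e, Fintype.card_sum, Fintype.card_fin, two_mul]
  have isLagrangian {S : Submodule k V} (hS : finrank k S = n ∧ ∀ x ∈ S, q x = 0) :
      q.IsLagrangian S :=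
    ⟨hS.2, by omega⟩
  rw [← hL.1]
  exact (isLagrangian hL).finrank_inf_add_finrank_inf_add_finrank_inf_mod_two
    (QuadraticMap.nondegenerate_polarBilin_of_hyperbolic hq) (isLagrangian hW) (isLagrangian hU)
end

section
/- Let k be a field of characteristic 2, m ≥ 3 an odd integer, and V a k-vector space of dimension 2m. Fix a basis e_1, …, e_{2m} of V. Then the quadratic form Q on Λ^m V defined by Q(Σ x_I e_I) = Σ_{I,J disjoint, min(I)<min(J)} x_I x_J (sum over pairs of disjoint increasing m-multi-indices) satisfies: Q(x ∧ w) = 0 for every x ∈ V and w ∈ Λ^{m−1} V. -/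
/-- Coordinates of `Λ^m V` with respect to a basis of `V` indexed by `Fin N`:
they are indexed by `m`-element subsets of `Fin N`. -/
abbrev ExtIdx (N m : ℕ) := {s : Finset (Fin N) // s.card = m}

/-- The divided-square quadratic form on `Λ^m V` in characteristic `2`, in coordinates:
`Q(∑ x_I e_I) = ∑_{I ∩ J = ∅, min I < min J} x_I x_J`. -/
def divSq {k : Type*} [Field k] {N m : ℕ} (x : ExtIdx N m → k) : k :=
  ∑ p ∈ Finset.univ.filter
      (fun p : ExtIdx N m × ExtIdx N m =>
        Disjoint p.1.1 p.2.1 ∧ p.1.1.min < p.2.1.min),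
    x p.1 * x p.2

/-- The coordinates of `ξ ∧ w` for `ξ ∈ V` and `w ∈ Λ^{m-1} V`, in characteristic `2`
(no signs): `(ξ ∧ w)_I = ∑_{i ∈ I} ξ_i w_{I∖{i}}`. -/
def wedgeVec {k : Type*} [Field k] {N : ℕ} (m : ℕ) (ξ : Fin N → k)
    (w : ExtIdx N (m - 1) → k) : ExtIdx N m → k :=
  fun I => ∑ i ∈ I.1.attach, ξ i.1 *
    w ⟨I.1.erase i.1, by rw [Finset.card_erase_of_mem i.2, I.2]⟩

open Finset

/-- Extend coordinates to all finsets by zero. -/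
def coordAux {k : Type*} [Field k] {N m : ℕ} (x : ExtIdx N m → k) :
    Finset (Fin N) → k :=
  fun s => if h : s.card = m then x ⟨s, h⟩ else 0

lemma coordAux_spec {k : Type*} [Field k] {N m : ℕ} (x : ExtIdx N m → k)
    (s : Finset (Fin N)) (h : s.card = m) : coordAux x s = x ⟨s, h⟩ := dif_pos h

/-- Characterization of the index pairs occurring in `divSq` when `N = 2*m`. -/
lemma pair_iff {N m : ℕ} [NeZero N] (hm : 1 ≤ m) (hN : N = 2 * m) (I J : ExtIdx N m) :
    (Disjoint I.1 J.1 ∧ I.1.min < J.1.min) ↔ ((0 : Fin N) ∈ I.1 ∧ J.1 = I.1ᶜ) := by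
  constructor
  · rintro ⟨hd, hlt⟩
    have hu : I.1 ∪ J.1 = Finset.univ := by
      apply Finset.eq_univ_of_card
      rw [Finset.card_union_of_disjoint hd, I.2, J.2]
      simp [hN, two_mul]
    have hJc : J.1 = I.1ᶜ := by
      ext a
      simp only [Finset.mem_compl]
      constructor
      · intro haJ haI
        exact (Finset.disjoint_left.mp hd haI) haJ
      · intro haI
        have : a ∈ I.1 ∪ J.1 := hu ▸ Finset.mem_univ a
        rcases Finset.mem_union.mp this with h | h
        · exact absurd h haI
        · exact h
    refine ⟨?_, hJc⟩
    by_contra h0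
    have h0J : (0 : Fin N) ∈ J.1 := by
      have : (0 : Fin N) ∈ I.1 ∪ J.1 := hu ▸ Finset.mem_univ 0
      rcases Finset.mem_union.mp this with h | h
      · exact absurd h h0
      · exact h
    have h1 : J.1.min ≤ ((0 : Fin N) : WithTop (Fin N)) := Finset.min_le h0J
    have h2 : ((0 : Fin N) : WithTop (Fin N)) ≤ I.1.min :=
      Finset.le_min fun b _ => WithTop.coe_le_coe.mpr (Fin.zero_le b)
    exact absurd (lt_of_lt_of_le hlt (le_trans h1 h2)) (lt_irrefl _)
  · rintro ⟨h0, hJ⟩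
    have hd : Disjoint I.1 J.1 := hJ ▸ disjoint_compl_right
    refine ⟨hd, ?_⟩
    have hne : J.1.Nonempty := Finset.card_pos.mp (by rw [J.2]; omega)
    have hmin : J.1.min = ((J.1.min' hne : Fin N) : WithTop (Fin N)) :=
      (Finset.coe_min' hne).symm
    have hb : J.1.min' hne ∈ J.1 := Finset.min'_mem _ _
    have hbne : J.1.min' hne ≠ 0 := by
      intro h
      exact Finset.disjoint_left.mp hd h0 (h ▸ hb)
    have h1 : I.1.min ≤ ((0 : Fin N) : WithTop (Fin N)) := Finset.min_le h0
    have h2 : ((0 : Fin N) : WithTop (Fin N)) < J.1.min := by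
      rw [hmin]
      exact WithTop.coe_lt_coe.mpr (lt_of_le_of_ne (Fin.zero_le _) (Ne.symm hbne))
    exact lt_of_le_of_lt h1 h2

lemma divSq_eq {k : Type*} [Field k] {N m : ℕ} [NeZero N] (hm : 1 ≤ m) (hN : N = 2 * m)
    (x : ExtIdx N m → k) :
    divSq x = ∑ s ∈ Finset.univ.filter
        (fun s : Finset (Fin N) => s.card = m ∧ (0 : Fin N) ∈ s),
      coordAux x s * coordAux x sᶜ := by
  have hcompl : ∀ s : Finset (Fin N), s.card = m → sᶜ.card = m := by
    intro s hs; rw [Finset.card_compl, Fintype.card_fin, hs, hN]; omega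
  rw [divSq]
  refine Finset.sum_bij' (fun p _ => p.1.1)
    (fun s hs => (⟨s, (Finset.mem_filter.mp hs).2.1⟩,
      ⟨sᶜ, hcompl s (Finset.mem_filter.mp hs).2.1⟩)) ?_ ?_ ?_ ?_ ?_
  · intro p hp
    simp only [Finset.mem_filter, Finset.mem_univ, true_and] at hp ⊢
    exact ⟨p.1.2, ((pair_iff hm hN p.1 p.2).mp hp).1⟩
  · intro s hs
    simp only [Finset.mem_filter, Finset.mem_univ, true_and] at hs ⊢
    exact (pair_iff hm hN ⟨s, hs.1⟩ ⟨sᶜ, hcompl s hs.1⟩).mpr ⟨hs.2, rfl⟩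
  · intro p hp
    simp only [Finset.mem_filter, Finset.mem_univ, true_and] at hp
    have hJ := ((pair_iff hm hN p.1 p.2).mp hp).2
    exact Prod.ext (Subtype.ext rfl) (Subtype.ext hJ.symm)
  · intro s hs; rfl
  · intro p hp
    simp only [Finset.mem_filter, Finset.mem_univ, true_and] at hp
    have hJ := ((pair_iff hm hN p.1 p.2).mp hp).2
    rw [coordAux_spec x p.1.1 p.1.2, coordAux_spec x p.1.1ᶜ (hcompl _ p.1.2)]
    congr 1
    exact congrArg x (Subtype.ext hJ)

lemma wedge_coord {k : Type*} [Field k] {N m : ℕ} (ξ : Fin N → k)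
    (w : ExtIdx N (m - 1) → k) (s : Finset (Fin N)) (hs : s.card = m) :
    coordAux (wedgeVec m ξ w) s = ∑ i ∈ s, ξ i * coordAux w (s.erase i) := by
  rw [coordAux_spec _ s hs]
  show (∑ i ∈ s.attach, ξ i.1 * w ⟨s.erase i.1, by
      rw [Finset.card_erase_of_mem i.2, hs]⟩) = _
  rw [← Finset.sum_attach s (fun i => ξ i * coordAux w (s.erase i))]
  refine Finset.sum_congr rfl fun i _ => ?_
  rw [coordAux_spec w _ (by rw [Finset.card_erase_of_mem i.2, hs])]


/-- The involution on triples used in the cancellation argument. -/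
def invo {N : ℕ} [NeZero N] (t : Finset (Fin N) × Fin N × Fin N) :
    Finset (Fin N) × Fin N × Fin N :=
  if t.2.1 = 0 then (insert 0 (t.1ᶜ.erase t.2.2), 0, t.2.2)
  else (insert t.2.2 (t.1.erase t.2.1), t.2.2, t.2.1)

lemma invo_zero {N : ℕ} [NeZero N] (I : Finset (Fin N)) (j : Fin N) :
    invo (I, 0, j) = (insert 0 (Iᶜ.erase j), 0, j) := if_pos rfl

lemma invo_ne {N : ℕ} [NeZero N] (I : Finset (Fin N)) (i j : Fin N) (h : i ≠ 0) :
    invo (I, i, j) = (insert j (I.erase i), j, i) := if_neg h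

lemma key_sum {k : Type*} [Field k] [CharP k 2] {N m : ℕ} [NeZero N] (hm : 3 ≤ m)
    (hN : N = 2 * m) (ξ : Fin N → k) (w' : Finset (Fin N) → k) :
    ∑ t ∈ Finset.univ.filter (fun t : Finset (Fin N) × Fin N × Fin N =>
        t.1.card = m ∧ (0 : Fin N) ∈ t.1 ∧ t.2.1 ∈ t.1 ∧ t.2.2 ∈ t.1ᶜ),
      ξ t.2.1 * ξ t.2.2 * w' (t.1.erase t.2.1) * w' (t.1ᶜ.erase t.2.2) = 0 := by
  have hmem : ∀ I : Finset (Fin N), ∀ i j : Fin N,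
      ((I, i, j) ∈ Finset.univ.filter (fun t : Finset (Fin N) × Fin N × Fin N =>
        t.1.card = m ∧ (0 : Fin N) ∈ t.1 ∧ t.2.1 ∈ t.1 ∧ t.2.2 ∈ t.1ᶜ)) ↔
      (I.card = m ∧ (0 : Fin N) ∈ I ∧ i ∈ I ∧ j ∉ I) := by
    intro I i j; simp [Finset.mem_filter, Finset.mem_compl]
  apply Finset.sum_involution (fun t _ => invo t)
  · -- value cancellation
    rintro ⟨I, i, j⟩ ht
    obtain ⟨hc, h0, hi, hj⟩ := (hmem I i j).mp ht
    have hij : i ≠ j := fun h => hj (h ▸ hi)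
    suffices h : (fun t : Finset (Fin N) × Fin N × Fin N =>
        ξ t.2.1 * ξ t.2.2 * w' (t.1.erase t.2.1) * w' (t.1ᶜ.erase t.2.2)) (invo (I, i, j)) =
        ξ i * ξ j * w' (I.erase i) * w' (Iᶜ.erase j) by
      simpa [h] using CharTwo.add_self_eq_zero (ξ i * ξ j * w' (I.erase i) * w' (Iᶜ.erase j))
    by_cases h : i = 0
    · subst h
      have e1 : (insert (0:Fin N) (Iᶜ.erase j)).erase 0 = Iᶜ.erase j :=
        Finset.erase_insert (by simp [Finset.mem_erase, h0])
      have e2 : (insert (0:Fin N) (Iᶜ.erase j))ᶜ = (insert j I).erase 0 := by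
        rw [Finset.compl_insert, Finset.compl_erase, compl_compl]
      have e3 : ((insert j I).erase (0:Fin N)).erase j = I.erase 0 := by
        rw [Finset.erase_right_comm, Finset.erase_insert hj]
      rw [invo_zero]
      simp only [e1, e2, e3]
      ring
    · have hje : j ∉ I.erase i := fun hh => hj (Finset.mem_of_mem_erase hh)
      have hic : i ∉ Iᶜ := by simp [hi]
      have e1 : (insert j (I.erase i)).erase j = I.erase i := Finset.erase_insert hje
      have e2 : (insert j (I.erase i))ᶜ = (insert i Iᶜ).erase j := by
        rw [Finset.compl_insert, Finset.compl_erase]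
      have e3 : ((insert i Iᶜ).erase j).erase i = Iᶜ.erase j := by
        rw [Finset.erase_right_comm, Finset.erase_insert hic]
      rw [invo_ne _ _ _ h]
      simp only [e1, e2, e3]
      ring
  · -- no fixed points
    rintro ⟨I, i, j⟩ ht _
    obtain ⟨hc, h0, hi, hj⟩ := (hmem I i j).mp ht
    have hij : i ≠ j := fun h => hj (h ▸ hi)
    intro hEq
    by_cases h : i = 0
    · subst h
      rw [invo_zero] at hEq
      have hI : insert (0:Fin N) (Iᶜ.erase j) = I := congrArg Prod.fst hEq
      have h2 : 1 < I.card := by omega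
      obtain ⟨a, haI, ha0⟩ := Finset.exists_mem_ne h2 0
      have haI' : a ∈ insert (0:Fin N) (Iᶜ.erase j) := hI.symm ▸ haI
      rcases Finset.mem_insert.mp haI' with h' | h'
      · exact ha0 h'
      · exact (Finset.mem_compl.mp (Finset.mem_of_mem_erase h')) haI
    · rw [invo_ne _ _ _ h] at hEq
      have : j = i := congrArg (fun t : Finset (Fin N) × Fin N × Fin N => t.2.1) hEq
      exact hij this.symm
  · -- involution
    rintro ⟨I, i, j⟩ ht
    obtain ⟨hc, h0, hi, hj⟩ := (hmem I i j).mp ht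
    have hj0 : j ≠ 0 := fun h => hj (h ▸ h0)
    by_cases h : i = 0
    · subst h
      rw [invo_zero, invo_zero]
      have e2 : (insert (0:Fin N) (Iᶜ.erase j))ᶜ = (insert j I).erase 0 := by
        rw [Finset.compl_insert, Finset.compl_erase, compl_compl]
      have e3 : ((insert j I).erase (0:Fin N)).erase j = I.erase 0 := by
        rw [Finset.erase_right_comm, Finset.erase_insert hj]
      rw [e2, e3, Finset.insert_erase h0]
    · have hje : j ∉ I.erase i := fun hh => hj (Finset.mem_of_mem_erase hh)
      rw [invo_ne _ _ _ h, invo_ne _ _ _ hj0, Finset.erase_insert hje,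
        Finset.insert_erase hi]

  · -- invo maps the set to itself
    rintro ⟨I, i, j⟩ ht
    obtain ⟨hc, h0, hi, hj⟩ := (hmem I i j).mp ht
    have hij : i ≠ j := fun h => hj (h ▸ hi)
    have hj0 : j ≠ 0 := fun h => hj (h ▸ h0)
    by_cases h : i = 0
    · subst h
      rw [invo_zero]
      apply (hmem _ _ _).mpr
      have h0c : (0:Fin N) ∉ Iᶜ.erase j := by simp [Finset.mem_erase, h0]
      have hcc : Iᶜ.card = m := by
        rw [Finset.card_compl, Fintype.card_fin, hc, hN]; omega
      refine ⟨?_, Finset.mem_insert_self _ _, Finset.mem_insert_self _ _, ?_⟩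
      · rw [Finset.card_insert_of_notMem h0c,
          Finset.card_erase_of_mem (by simpa using hj), hcc]
        omega
      · simp [Finset.mem_insert, Finset.mem_erase, hj0, hj]
    · rw [invo_ne _ _ _ h]
      apply (hmem _ _ _).mpr
      have hje : j ∉ I.erase i := fun hh => hj (Finset.mem_of_mem_erase hh)
      refine ⟨?_, ?_, Finset.mem_insert_self _ _, ?_⟩
      · rw [Finset.card_insert_of_notMem hje, Finset.card_erase_of_mem hi, hc]
        omega
      · exact Finset.mem_insert_of_mem (Finset.mem_erase.mpr ⟨fun hh => h hh.symm, h0⟩)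
      · simp [Finset.mem_insert, Finset.mem_erase, hij, hi]

/-- Let `k` be a field of characteristic `2`, `m ≥ 3` odd, and `V` of
dimension `2m`.  The divided-square quadratic form `Q` on `Λ^m V` satisfies
`Q(ξ ∧ w) = 0` for every `ξ ∈ V` and `w ∈ Λ^{m-1} V`. -/
theorem stmt2 {k : Type*} [Field k] [CharP k 2] (m : ℕ) (hm : Odd m) (hm3 : 3 ≤ m)
    (ξ : Fin (2 * m) → k) (w : ExtIdx (2 * m) (m - 1) → k) :
    divSq (wedgeVec m ξ w) = 0 := by
  haveI : NeZero (2 * m) := ⟨by omega⟩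
  have hm1 : 1 ≤ m := by omega
  rw [divSq_eq hm1 rfl]
  have hcompl : ∀ s : Finset (Fin (2 * m)), s.card = m → sᶜ.card = m := by
    intro s hs; rw [Finset.card_compl, Fintype.card_fin, hs]; omega
  have step : ∀ s ∈ Finset.univ.filter
      (fun s : Finset (Fin (2 * m)) => s.card = m ∧ (0 : Fin (2 * m)) ∈ s),
      coordAux (wedgeVec m ξ w) s * coordAux (wedgeVec m ξ w) sᶜ =
      ∑ p ∈ s ×ˢ sᶜ,
        ξ p.1 * ξ p.2 * coordAux w (s.erase p.1) * coordAux w (sᶜ.erase p.2) := by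
    intro s hs
    obtain ⟨hc, h0⟩ := (Finset.mem_filter.mp hs).2
    rw [wedge_coord ξ w s hc, wedge_coord ξ w sᶜ (hcompl s hc), Finset.sum_mul_sum,
      Finset.sum_product]
    exact Finset.sum_congr rfl fun i _ => Finset.sum_congr rfl fun j _ => by ring
  rw [Finset.sum_congr rfl step]
  have hiff : ∀ t : Finset (Fin (2 * m)) × (Fin (2 * m) × Fin (2 * m)),
      t ∈ Finset.univ.filter (fun t : Finset (Fin (2 * m)) × Fin (2 * m) × Fin (2 * m) =>
        t.1.card = m ∧ (0 : Fin (2 * m)) ∈ t.1 ∧ t.2.1 ∈ t.1 ∧ t.2.2 ∈ t.1ᶜ) ↔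
      t.1 ∈ Finset.univ.filter
          (fun s : Finset (Fin (2 * m)) => s.card = m ∧ (0 : Fin (2 * m)) ∈ s)
        ∧ t.2 ∈ t.1 ×ˢ t.1ᶜ := by
    intro t
    simp [Finset.mem_filter, Finset.mem_product, and_assoc]
  calc _ = ∑ t ∈ Finset.univ.filter
        (fun t : Finset (Fin (2 * m)) × Fin (2 * m) × Fin (2 * m) =>
          t.1.card = m ∧ (0 : Fin (2 * m)) ∈ t.1 ∧ t.2.1 ∈ t.1 ∧ t.2.2 ∈ t.1ᶜ),
        ξ t.2.1 * ξ t.2.2 * coordAux w (t.1.erase t.2.1) * coordAux w (t.1ᶜ.erase t.2.2) :=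
      (Finset.sum_finset_product _ _ _ hiff).symm
    _ = 0 := key_sum hm3 rfl ξ (coordAux w)
end

section
/- Let k be a field of characteristic 2, m ≥ 3 odd, V a k-vector space of dimension 2m, and Q a quadratic form on Λ^m V written as Q(Σ_I y_I e_I) = Σ_{I ⪯ J} α_{IJ} y_I y_J with respect to a basis e_1,…,e_{2m}. If Q(x ∧ w) = 0 for all x ∈ V and all w ∈ Λ^{m−1} V, then: α_{II} = 0 for all I; α_{IJ} = 0 whenever the multi-indices I and J are not disjoint; and α_{IJ} = α_{KL} whenever I,J are disjoint, K,L are disjoint, and I and K share exactly m−1 indices. Consequently Q is a constant multiple of the divided-square quadratic form. -/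
/-- A fixed linear ordering `I ⪯ J` of the index sets, via a binary encoding. -/
def idxEnc {N : ℕ} (s : Finset (Fin N)) : ℕ := ∑ i ∈ s, 2 ^ (i : ℕ)

/-- A general quadratic form `Q(∑ y_I e_I) = ∑_{I ⪯ J} α_{IJ} y_I y_J` on `Λ^m V`,
in coordinates, with coefficients `α`. -/
def quadOfCoeff {k : Type*} [Field k] {N m : ℕ} (α : ExtIdx N m → ExtIdx N m → k)
    (y : ExtIdx N m → k) : k :=
  ∑ p ∈ Finset.univ.filter
      (fun p : ExtIdx N m × ExtIdx N m => idxEnc p.1.1 ≤ idxEnc p.2.1),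
    α p.1 p.2 * y p.1 * y p.2

lemma idxEnc_injective {N : ℕ} : Function.Injective (idxEnc (N := N)) := by
  intro s t h
  have h2 : Finset.image Fin.val s = Finset.image Fin.val t := by
    apply Finset.geomSum_injective (n := 2) le_rfl
    simpa [Finset.sum_image, Fin.val_injective.eq_iff, idxEnc] using h
  exact Finset.image_injective Fin.val_injective h2

lemma quad_ind {k : Type*} [Field k] {N m : ℕ} (α : ExtIdx N m → ExtIdx N m → k)
    (S : Finset (ExtIdx N m)) :
    quadOfCoeff α (fun I => if I ∈ S then (1:k) else 0) =
      ∑ X ∈ S, ∑ Y ∈ S, if idxEnc X.1 ≤ idxEnc Y.1 then α X Y else 0 := by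
  unfold quadOfCoeff
  rw [Finset.sum_filter, ← Finset.univ_product_univ, Finset.sum_product]
  rw [← Finset.sum_subset (Finset.subset_univ S) (fun X _ hX => ?_)]
  · refine Finset.sum_congr rfl (fun X hX => ?_)
    rw [← Finset.sum_subset (Finset.subset_univ S) (fun Y _ hY => by simp [hY])]
    exact Finset.sum_congr rfl (fun Y hY => by simp [hX, hY])
  · exact Finset.sum_eq_zero (fun Y _ => by simp [hX])

lemma wedge_eval {k : Type*} [Field k] {N mm : ℕ} (T : Finset (Fin N))
    (P : Finset (Fin N) → Prop) [DecidablePred P] (X : ExtIdx N mm) :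
    wedgeVec mm (fun j => if j ∈ T then (1:k) else 0)
      (fun W => if P W.1 then (1:k) else 0) X
      = ∑ j ∈ X.1 ∩ T, (if P (X.1.erase j) then (1:k) else 0) := by
  unfold wedgeVec
  rw [Finset.sum_attach X.1 (fun j => (if j ∈ T then (1:k) else 0) *
    (if P (X.1.erase j) then (1:k) else 0))]
  simp only [ite_mul, one_mul, zero_mul]
  exact Finset.sum_ite_mem _ _ _

section
variable {k : Type*} [Field k] {N : ℕ}

lemma ind_one {i : Fin N} {A B X : Finset (Fin N)} (hiA : i ∉ A) (hiB : i ∉ B) :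
    (∑ j ∈ X ∩ {i}, (if X.erase j = A ∨ X.erase j = B then (1:k) else 0))
    = if X = insert i A ∨ X = insert i B then 1 else 0 := by
  by_cases hi : i ∈ X
  · rw [Finset.inter_singleton_of_mem hi, Finset.sum_singleton]
    refine if_congr ?_ rfl rfl
    constructor
    · rintro (h | h)
      · exact Or.inl (by rw [← h, Finset.insert_erase hi])
      · exact Or.inr (by rw [← h, Finset.insert_erase hi])
    · rintro (h | h)
      · exact Or.inl (by rw [h, Finset.erase_insert hiA])
      · exact Or.inr (by rw [h, Finset.erase_insert hiB])
  · rw [Finset.inter_singleton_of_notMem hi, Finset.sum_empty]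
    rw [if_neg]
    rintro (h | h) <;> exact hi (h ▸ Finset.mem_insert_self i _)

lemma ind_two {a b : Fin N} {A B X : Finset (Fin N)} (hab : a ≠ b)
    (haA : a ∉ A) (hbA : b ∉ A) (haB : a ∉ B) (hbB : b ∉ B) :
    (∑ j ∈ X ∩ {a, b}, (if X.erase j = A ∨ X.erase j = B then (1:k) else 0))
    = if X = insert a A ∨ X = insert b A ∨ X = insert b B ∨ X = insert a B
      then 1 else 0 := by
  rw [Finset.inter_comm, ← Finset.sum_ite_mem]
  rw [Finset.sum_insert (by simpa using hab), Finset.sum_singleton]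
  simp only [← ite_and]
  by_cases h1 : a ∈ X ∧ (X.erase a = A ∨ X.erase a = B)
  · have hb : b ∉ X := by
      intro hb
      have hb' : b ∈ X.erase a := Finset.mem_erase.2 ⟨hab.symm, hb⟩
      rcases h1.2 with h | h <;> rw [h] at hb'
      · exact hbA hb'
      · exact hbB hb'
    rw [if_pos h1, if_neg (fun h2 => hb h2.1), add_zero, if_pos]
    rcases h1.2 with h | h
    · exact Or.inl (by rw [← h, Finset.insert_erase h1.1])
    · exact Or.inr (Or.inr (Or.inr (by rw [← h, Finset.insert_erase h1.1])))
  · by_cases h2 : b ∈ X ∧ (X.erase b = A ∨ X.erase b = B)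
    · rw [if_neg h1, if_pos h2, zero_add, if_pos]
      rcases h2.2 with h | h
      · exact Or.inr (Or.inl (by rw [← h, Finset.insert_erase h2.1]))
      · exact Or.inr (Or.inr (Or.inl (by rw [← h, Finset.insert_erase h2.1])))
    · rw [if_neg h1, if_neg h2, add_zero, if_neg]
      rintro (h | h | h | h)
      · exact h1 ⟨h ▸ Finset.mem_insert_self a A, Or.inl (by rw [h, Finset.erase_insert haA])⟩
      · exact h2 ⟨h ▸ Finset.mem_insert_self b A, Or.inl (by rw [h, Finset.erase_insert hbA])⟩
      · exact h2 ⟨h ▸ Finset.mem_insert_self b B, Or.inr (by rw [h, Finset.erase_insert hbB])⟩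
      · exact h1 ⟨h ▸ Finset.mem_insert_self a B, Or.inr (by rw [h, Finset.erase_insert haB])⟩
end

/-- complement of an `m`-subset of `Fin (2*m)` -/
def cpl {m : ℕ} (I : ExtIdx (2*m) m) : ExtIdx (2*m) m :=
  ⟨I.1ᶜ, by rw [Finset.card_compl, Fintype.card_fin, I.2]; omega⟩

section Main
variable {k : Type*} [Field k] [CharP k 2] {m : ℕ}
  (α : ExtIdx (2 * m) m → ExtIdx (2 * m) m → k)

lemma diag_zero (hm : 1 ≤ m)
    (hQ : ∀ (ξ : Fin (2 * m) → k) (w : ExtIdx (2 * m) (m - 1) → k),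
      quadOfCoeff α (wedgeVec m ξ w) = 0) (I : ExtIdx (2*m) m) : α I I = 0 := by
  obtain ⟨i, hi⟩ := Finset.card_pos.mp (show 0 < I.1.card by rw [I.2]; omega)
  set A := I.1.erase i with hA
  have hiA : i ∉ A := Finset.notMem_erase i I.1
  have h := hQ (fun j => if j ∈ ({i} : Finset (Fin (2*m))) then (1:k) else 0)
    (fun W => if W.1 = A ∨ W.1 = A then (1:k) else 0)
  have hwe : wedgeVec m (fun j => if j ∈ ({i} : Finset (Fin (2*m))) then (1:k) else 0)
      (fun W => if W.1 = A ∨ W.1 = A then (1:k) else 0)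
      = fun X => if X ∈ ({I} : Finset (ExtIdx (2*m) m)) then (1:k) else 0 := by
    funext X
    rw [wedge_eval (P := fun s => s = A ∨ s = A), ind_one hiA hiA]
    have hins : insert i A = I.1 := Finset.insert_erase hi
    rw [hins]
    refine if_congr ?_ rfl rfl
    simp [Subtype.ext_iff]
  rw [hwe, quad_ind] at h
  simpa using h

lemma nondisj_zero (hm : 1 ≤ m)
    (hQ : ∀ (ξ : Fin (2 * m) → k) (w : ExtIdx (2 * m) (m - 1) → k),
      quadOfCoeff α (wedgeVec m ξ w) = 0)
    {I J : ExtIdx (2*m) m} (hne : I ≠ J) (hnd : ¬ Disjoint I.1 J.1)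
    (henc : idxEnc I.1 ≤ idxEnc J.1) : α I J = 0 := by
  obtain ⟨i, hiI, hiJ⟩ := Finset.not_disjoint_iff.mp hnd
  set A := I.1.erase i with hA
  set B := J.1.erase i with hB
  have hiA : i ∉ A := Finset.notMem_erase i I.1
  have hiB : i ∉ B := Finset.notMem_erase i J.1
  have hinsA : insert i A = I.1 := Finset.insert_erase hiI
  have hinsB : insert i B = J.1 := Finset.insert_erase hiJ
  have h := hQ (fun j => if j ∈ ({i} : Finset (Fin (2*m))) then (1:k) else 0)
    (fun W => if W.1 = A ∨ W.1 = B then (1:k) else 0)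
  have hwe : wedgeVec m (fun j => if j ∈ ({i} : Finset (Fin (2*m))) then (1:k) else 0)
      (fun W => if W.1 = A ∨ W.1 = B then (1:k) else 0)
      = fun X => if X ∈ ({I, J} : Finset (ExtIdx (2*m) m)) then (1:k) else 0 := by
    funext X
    rw [wedge_eval (P := fun s => s = A ∨ s = B), ind_one hiA hiB, hinsA, hinsB]
    refine if_congr ?_ rfl rfl
    simp [Subtype.ext_iff]
  rw [hwe, quad_ind] at h
  have hJnotI : I ∉ ({J} : Finset (ExtIdx (2*m) m)) := by simpa using hne
  rw [Finset.sum_insert hJnotI, Finset.sum_singleton, Finset.sum_insert hJnotI,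
    Finset.sum_insert hJnotI, Finset.sum_singleton, Finset.sum_singleton] at h
  have hencne : idxEnc J.1 ≠ idxEnc I.1 := by
    intro hh
    exact hne (Subtype.ext (idxEnc_injective hh.symm))
  have hJI : ¬ idxEnc J.1 ≤ idxEnc I.1 := fun hh =>
    hencne (le_antisymm hh henc)
  rw [if_pos le_rfl, if_pos le_rfl, if_pos henc, if_neg hJI,
    diag_zero α hm hQ I, diag_zero α hm hQ J] at h
  simpa using h

end Main

section Main2
set_option linter.unusedSectionVars false
variable {k : Type*} [Field k] [CharP k 2] {m : ℕ}
  (α : ExtIdx (2 * m) m → ExtIdx (2 * m) m → k)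

/-- the (ordered) coefficient attached to the complementary pair `{X, Xᶜ}` -/
def gam (X : ExtIdx (2*m) m) : k :=
  (if idxEnc X.1 ≤ idxEnc (cpl X).1 then α X (cpl X) else 0) +
  (if idxEnc (cpl X).1 ≤ idxEnc X.1 then α (cpl X) X else 0)

set_option maxHeartbeats 1000000 in
lemma swap_rel (hm3 : 3 ≤ m)
    (hQ : ∀ (ξ : Fin (2 * m) → k) (w : ExtIdx (2 * m) (m - 1) → k),
      quadOfCoeff α (wedgeVec m ξ w) = 0)
    {I K : ExtIdx (2*m) m} (hIK : (I.1 ∩ K.1).card = m - 1) :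
    gam α I = gam α K := by
  have hm : 1 ≤ m := by omega
  have h1 : (I.1 \ K.1).card = 1 := by
    have := Finset.card_sdiff_add_card_inter I.1 K.1
    rw [hIK, I.2] at this; omega
  have h2 : (K.1 \ I.1).card = 1 := by
    have := Finset.card_sdiff_add_card_inter K.1 I.1
    rw [Finset.inter_comm, hIK, K.2] at this; omega
  obtain ⟨a, ha⟩ := Finset.card_eq_one.mp h1
  obtain ⟨b, hb⟩ := Finset.card_eq_one.mp h2
  have haI : a ∈ I.1 ∧ a ∉ K.1 := by
    have : a ∈ I.1 \ K.1 := by rw [ha]; exact Finset.mem_singleton_self a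
    exact Finset.mem_sdiff.mp this
  have hbK : b ∈ K.1 ∧ b ∉ I.1 := by
    have : b ∈ K.1 \ I.1 := by rw [hb]; exact Finset.mem_singleton_self b
    exact Finset.mem_sdiff.mp this
  have hab : a ≠ b := fun h => haI.2 (h ▸ hbK.1)
  set A := I.1 ∩ K.1 with hAdef
  have hIA : insert a A = I.1 := by
    have h' := Finset.sdiff_union_inter I.1 K.1
    rw [ha] at h'
    rw [← h', Finset.insert_eq, hAdef]
  have hKA : insert b A = K.1 := by
    have h' := Finset.sdiff_union_inter K.1 I.1
    rw [hb, Finset.inter_comm] at h'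
    rw [← h', Finset.insert_eq, hAdef]
  have haA : a ∉ A := fun h => haI.2 (Finset.mem_inter.mp h).2
  have hbA : b ∉ A := fun h => hbK.2 (Finset.mem_inter.mp h).1
  have hcplI : (cpl I).1 = I.1ᶜ := rfl
  have hcplK : (cpl K).1 = K.1ᶜ := rfl
  set B := (cpl I).1.erase b with hBdef
  have hbJ : b ∈ (cpl I).1 := Finset.mem_compl.mpr hbK.2
  have hinsB : insert b B = (cpl I).1 := Finset.insert_erase hbJ
  have haB : a ∉ B := fun h =>
    (Finset.mem_compl.mp (Finset.mem_of_mem_erase h)) haI.1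
  have hbB : b ∉ B := Finset.notMem_erase b _
  have hmemI : ∀ x, x ∈ I.1 ↔ x = a ∨ x ∈ A := fun x => by
    rw [← hIA]; exact Finset.mem_insert
  have hmemK : ∀ x, x ∈ K.1 ↔ x = b ∨ x ∈ A := fun x => by
    rw [← hKA]; exact Finset.mem_insert
  have hLx : insert a B = (cpl K).1 := by
    ext x
    simp only [Finset.mem_insert, hBdef, Finset.mem_erase, hcplI, hcplK,
      Finset.mem_compl]
    constructor
    · rintro (rfl | ⟨hxb, hxI⟩)
      · exact haI.2
      · intro hxK
        rcases (hmemK x).mp hxK with rfl | hxA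
        · exact hxb rfl
        · exact hxI ((hmemI x).mpr (Or.inr hxA))
    · intro hxK
      by_cases hxa : x = a
      · exact Or.inl hxa
      · refine Or.inr ⟨?_, ?_⟩
        · rintro rfl; exact hxK ((hmemK x).mpr (Or.inl rfl))
        · intro hxI
          rcases (hmemI x).mp hxI with h | h
          · exact hxa h
          · exact hxK ((hmemK x).mpr (Or.inr h))
  -- nonemptiness witnesses
  have hAne : A.Nonempty := Finset.card_pos.mp (by rw [hIK]; omega)
  obtain ⟨x0, hx0⟩ := hAne
  have hx0I : x0 ∈ I.1 := (Finset.mem_inter.mp hx0).1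
  have hx0K : x0 ∈ K.1 := (Finset.mem_inter.mp hx0).2
  have hBne : B.Nonempty := Finset.card_pos.mp (by
    rw [hBdef, Finset.card_erase_of_mem hbJ, (cpl I).2]; omega)
  obtain ⟨z0, hz0⟩ := hBne
  have hz0J : z0 ∈ (cpl I).1 := Finset.mem_of_mem_erase hz0
  have hz0L : z0 ∈ (cpl K).1 := by
    rw [← hLx]; exact Finset.mem_insert_of_mem hz0
  have haL : a ∈ (cpl K).1 := by rw [← hLx]; exact Finset.mem_insert_self a B
  -- distinctness
  have ne_IJ : I ≠ cpl I := by
    intro h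
    have h2 := haI.1
    rw [h, hcplI, Finset.mem_compl] at h2
    exact h2 haI.1
  have ne_IK : I ≠ K := by
    intro h
    have h2 := haI.1
    rw [h] at h2
    exact haI.2 h2
  have ne_IL : I ≠ cpl K := by
    intro h
    have h2 := hx0I
    rw [h, hcplK, Finset.mem_compl] at h2
    exact h2 hx0K
  have ne_JK : cpl I ≠ K := by
    intro h
    have h2 := hx0K
    rw [← h, hcplI, Finset.mem_compl] at h2
    exact h2 hx0I
  have ne_JL : cpl I ≠ cpl K := fun h =>
    ne_IK (Subtype.ext (compl_injective (congrArg Subtype.val h)))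
  have ne_KL : K ≠ cpl K := by
    intro h
    have h2 := hbK.1
    rw [h, hcplK, Finset.mem_compl] at h2
    exact h2 hbK.1
  -- the wedge vector
  have h := hQ (fun j => if j ∈ ({a, b} : Finset (Fin (2*m))) then (1:k) else 0)
    (fun W => if W.1 = A ∨ W.1 = B then (1:k) else 0)
  have hwe : wedgeVec m (fun j => if j ∈ ({a, b} : Finset (Fin (2*m))) then (1:k) else 0)
      (fun W => if W.1 = A ∨ W.1 = B then (1:k) else 0)
      = fun X => if X ∈ ({I, cpl I, K, cpl K} : Finset (ExtIdx (2*m) m)) then (1:k) else 0 := by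
    funext X
    rw [wedge_eval (P := fun s => s = A ∨ s = B), ind_two hab haA hbA haB hbB]
    rw [hIA, hKA, hinsB, hLx]
    refine if_congr ?_ rfl rfl
    simp only [Finset.mem_insert, Finset.mem_singleton, Subtype.ext_iff]
    constructor
    · rintro (h | h | h | h)
      exacts [Or.inl h, Or.inr (Or.inr (Or.inl h)), Or.inr (Or.inl h),
        Or.inr (Or.inr (Or.inr h))]
    · rintro (h | h | h | h)
      exacts [Or.inl h, Or.inr (Or.inr (Or.inl h)), Or.inr (Or.inl h),
        Or.inr (Or.inr (Or.inr h))]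
  rw [hwe, quad_ind] at h
  have hn1 : I ∉ ({cpl I, K, cpl K} : Finset (ExtIdx (2*m) m)) := by
    simp [ne_IJ, ne_IK, ne_IL]
  have hn2 : cpl I ∉ ({K, cpl K} : Finset (ExtIdx (2*m) m)) := by
    simp [ne_JK, ne_JL]
  have hn3 : K ∉ ({cpl K} : Finset (ExtIdx (2*m) m)) := by
    simp [ne_KL]
  simp only [Finset.sum_insert hn1, Finset.sum_insert hn2, Finset.sum_insert hn3,
    Finset.sum_singleton] at h
  have hz : ∀ X Y : ExtIdx (2*m) m, X ≠ Y → ¬ Disjoint X.1 Y.1 →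
      (if idxEnc X.1 ≤ idxEnc Y.1 then α X Y else (0:k)) = 0 := by
    intro X Y h1 h2
    split_ifs with h3
    · exact nondisj_zero α hm hQ h1 h2 h3
    · rfl
  have hdz : ∀ X : ExtIdx (2*m) m,
      (if idxEnc X.1 ≤ idxEnc X.1 then α X X else (0:k)) = 0 := fun X => by
    rw [if_pos le_rfl]; exact diag_zero α hm hQ X
  have ndIK : ¬ Disjoint I.1 K.1 := Finset.not_disjoint_iff.mpr ⟨x0, hx0I, hx0K⟩
  have ndKI : ¬ Disjoint K.1 I.1 := Finset.not_disjoint_iff.mpr ⟨x0, hx0K, hx0I⟩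
  have ndIL : ¬ Disjoint I.1 (cpl K).1 := Finset.not_disjoint_iff.mpr ⟨a, haI.1, haL⟩
  have ndLI : ¬ Disjoint (cpl K).1 I.1 := Finset.not_disjoint_iff.mpr ⟨a, haL, haI.1⟩
  have ndJK : ¬ Disjoint (cpl I).1 K.1 := Finset.not_disjoint_iff.mpr ⟨b, hbJ, hbK.1⟩
  have ndKJ : ¬ Disjoint K.1 (cpl I).1 := Finset.not_disjoint_iff.mpr ⟨b, hbK.1, hbJ⟩
  have ndJL : ¬ Disjoint (cpl I).1 (cpl K).1 := Finset.not_disjoint_iff.mpr ⟨z0, hz0J, hz0L⟩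
  have ndLJ : ¬ Disjoint (cpl K).1 (cpl I).1 := Finset.not_disjoint_iff.mpr ⟨z0, hz0L, hz0J⟩
  rw [hdz I, hdz (cpl I), hdz K, hdz (cpl K),
    hz I K ne_IK ndIK, hz K I ne_IK.symm ndKI,
    hz I (cpl K) ne_IL ndIL, hz (cpl K) I ne_IL.symm ndLI,
    hz (cpl I) K ne_JK ndJK, hz K (cpl I) ne_JK.symm ndKJ,
    hz (cpl I) (cpl K) ne_JL ndJL, hz (cpl K) (cpl I) ne_JL.symm ndLJ] at h
  have key : ((if idxEnc I.1 ≤ idxEnc (cpl I).1 then α I (cpl I) else 0) +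
      (if idxEnc (cpl I).1 ≤ idxEnc I.1 then α (cpl I) I else 0)) +
      ((if idxEnc K.1 ≤ idxEnc (cpl K).1 then α K (cpl K) else 0) +
      (if idxEnc (cpl K).1 ≤ idxEnc K.1 then α (cpl K) K else 0)) = 0 := by
    linear_combination h
  simp only [gam]
  have := eq_neg_of_add_eq_zero_left key
  rwa [CharTwo.neg_eq] at this

end Main2

section Main3
set_option linter.unusedSectionVars false
variable {k : Type*} [Field k] [CharP k 2] {m : ℕ}
  (α : ExtIdx (2 * m) m → ExtIdx (2 * m) m → k)

lemma gam_const (hm3 : 3 ≤ m)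
    (hQ : ∀ (ξ : Fin (2 * m) → k) (w : ExtIdx (2 * m) (m - 1) → k),
      quadOfCoeff α (wedgeVec m ξ w) = 0)
    (I K : ExtIdx (2*m) m) : gam α I = gam α K := by
  suffices h : ∀ n (I K : ExtIdx (2*m) m), (I.1 \ K.1).card = n → gam α I = gam α K from
    h _ I K rfl
  intro n
  induction n with
  | zero =>
    intro I K h0
    have hsub : I.1 ⊆ K.1 := by
      rwa [Finset.card_eq_zero, Finset.sdiff_eq_empty_iff_subset] at h0
    have : I.1 = K.1 := Finset.eq_of_subset_of_card_le hsub (by rw [I.2, K.2])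
    rw [Subtype.ext this]
  | succ n ih =>
    intro I K hc
    obtain ⟨a, haIK⟩ := Finset.card_pos.mp (show 0 < (I.1 \ K.1).card by omega)
    have haI : a ∈ I.1 := (Finset.mem_sdiff.mp haIK).1
    have haK : a ∉ K.1 := (Finset.mem_sdiff.mp haIK).2
    have hKIpos : 0 < (K.1 \ I.1).card := by
      have e1 := Finset.card_sdiff_add_card_inter I.1 K.1
      have e2 := Finset.card_sdiff_add_card_inter K.1 I.1
      rw [Finset.inter_comm] at e2
      rw [I.2] at e1; rw [K.2] at e2
      omega
    obtain ⟨b, hbKI⟩ := Finset.card_pos.mp hKIpos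
    have hbK : b ∈ K.1 := (Finset.mem_sdiff.mp hbKI).1
    have hbI : b ∉ I.1 := (Finset.mem_sdiff.mp hbKI).2
    have hbe : b ∉ I.1.erase a := fun h => hbI (Finset.mem_of_mem_erase h)
    set K' : ExtIdx (2*m) m := ⟨insert b (I.1.erase a), by
      rw [Finset.card_insert_of_notMem hbe, Finset.card_erase_of_mem haI, I.2]
      omega⟩ with hK'def
    have hIK' : (I.1 ∩ K'.1).card = m - 1 := by
      have hie : I.1 ∩ K'.1 = I.1.erase a := by
        ext x
        simp only [hK'def, Finset.mem_inter, Finset.mem_insert, Finset.mem_erase]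
        constructor
        · rintro ⟨hxI, rfl | h⟩
          · exact absurd hxI hbI
          · exact h
        · intro h; exact ⟨h.2, Or.inr h⟩
      rw [hie, Finset.card_erase_of_mem haI, I.2]
    have hK'K : (K'.1 \ K.1).card = n := by
      have : K'.1 \ K.1 = (I.1 \ K.1).erase a := by
        show insert b (I.1.erase a) \ K.1 = _
        rw [Finset.insert_sdiff_of_mem _ hbK, Finset.erase_sdiff_comm]
      rw [this, Finset.card_erase_of_mem haIK, hc]
      omega
    rw [swap_rel α hm3 hQ hIK']
    exact ih K' K hK'K

lemma min_ne_of_disjoint {N : ℕ} {s t : Finset (Fin N)} (h : Disjoint s t)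
    (hs : s.Nonempty) (ht : t.Nonempty) : s.min ≠ t.min := by
  intro heq
  obtain ⟨x, hx⟩ := Finset.min_of_nonempty hs
  have hx' : t.min = x := by rw [← heq, hx]
  exact (Finset.disjoint_left.mp h (Finset.mem_of_min hx)) (Finset.mem_of_min hx')

end Main3

set_option maxHeartbeats 1000000 in
/-- (char 2, `m ≥ 3` odd, `dim V = 2m`.)  If a quadratic form
`Q(∑ y_I e_I) = ∑_{I ⪯ J} α_{IJ} y_I y_J` on `Λ^m V` satisfies `Q(ξ ∧ w) = 0` for all
`ξ ∈ V`, `w ∈ Λ^{m-1} V`, then `α_{II} = 0` for all `I`; `α_{IJ} = 0` whenever `I, J`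
are not disjoint; `α_{IJ} = α_{KL}` whenever `I,J` are disjoint, `K,L` are disjoint and
`I, K` share exactly `m - 1` indices; and consequently `Q` is a constant multiple of the
divided-square quadratic form. -/
theorem stmt3 {k : Type*} [Field k] [CharP k 2] (m : ℕ) (hm : Odd m) (hm3 : 3 ≤ m)
    (α : ExtIdx (2 * m) m → ExtIdx (2 * m) m → k)
    (hQ : ∀ (ξ : Fin (2 * m) → k) (w : ExtIdx (2 * m) (m - 1) → k),
      quadOfCoeff α (wedgeVec m ξ w) = 0) :
    (∀ I, α I I = 0) ∧
    (∀ I J, idxEnc I.1 ≤ idxEnc J.1 → ¬ Disjoint I.1 J.1 → α I J = 0) ∧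
    (∀ I J K L, idxEnc I.1 ≤ idxEnc J.1 → idxEnc K.1 ≤ idxEnc L.1 →
      Disjoint I.1 J.1 → Disjoint K.1 L.1 → (I.1 ∩ K.1).card = m - 1 →
      α I J = α K L) ∧
    (∃ c : k, ∀ y, quadOfCoeff α y = c * divSq y) := by
  have hm1 : 1 ≤ m := by omega
  have hdiag : ∀ I, α I I = 0 := diag_zero α hm1 hQ
  have hP2 : ∀ I J, idxEnc I.1 ≤ idxEnc J.1 → ¬ Disjoint I.1 J.1 → α I J = 0 := by
    intro I J henc hnd
    by_cases h : I = J
    · subst h; exact hdiag I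
    · exact nondisj_zero α hm1 hQ h hnd henc
  have hcompl : ∀ (I J : ExtIdx (2*m) m), Disjoint I.1 J.1 → J = cpl I := by
    intro I J hd
    refine Subtype.ext ?_
    have hsub : J.1 ⊆ I.1ᶜ := fun x hx =>
      Finset.mem_compl.mpr (Finset.disjoint_right.mp hd hx)
    exact Finset.eq_of_subset_of_card_le hsub (by rw [(cpl I).2, J.2])
  have hne_cpl : ∀ I : ExtIdx (2*m) m, I ≠ cpl I := by
    intro I h
    obtain ⟨x, hx⟩ := Finset.card_pos.mp (show 0 < I.1.card by rw [I.2]; omega)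
    have hx2 : x ∈ (cpl I).1 := by rw [← h]; exact hx
    exact Finset.mem_compl.mp hx2 hx
  have hgam : ∀ I : ExtIdx (2*m) m, idxEnc I.1 ≤ idxEnc (cpl I).1 →
      gam α I = α I (cpl I) := by
    intro I henc
    have hne : ¬ idxEnc (cpl I).1 ≤ idxEnc I.1 := by
      intro hh
      exact hne_cpl I (Subtype.ext (idxEnc_injective (le_antisymm henc hh)))
    simp only [gam]; rw [if_pos henc, if_neg hne, add_zero]
  have hP3 : ∀ I J K L : ExtIdx (2*m) m, idxEnc I.1 ≤ idxEnc J.1 →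
      idxEnc K.1 ≤ idxEnc L.1 → Disjoint I.1 J.1 → Disjoint K.1 L.1 →
      (I.1 ∩ K.1).card = m - 1 → α I J = α K L := by
    intro I J K L h1 h2 hd1 hd2 hcard
    rw [hcompl I J hd1] at h1 ⊢
    rw [hcompl K L hd2] at h2 ⊢
    rw [← hgam I h1, ← hgam K h2]
    exact swap_rel α hm3 hQ hcard
  refine ⟨hdiag, hP2, hP3, ?_⟩
  obtain ⟨s0, -, hs0⟩ := Finset.exists_subset_card_eq
    (s := (Finset.univ : Finset (Fin (2*m)))) (n := m)
    (by rw [Finset.card_univ, Fintype.card_fin]; omega)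
  set I₀ : ExtIdx (2*m) m := ⟨s0, hs0⟩ with hI₀
  refine ⟨gam α I₀, fun y => ?_⟩
  have hne12 : ∀ p : ExtIdx (2*m) m × ExtIdx (2*m) m, Disjoint p.1.1 p.2.1 →
      p.1.1 ≠ p.2.1 := by
    intro p hd heq
    rw [heq] at hd
    have h0 : p.2.1 = ∅ := by simpa using disjoint_self.mp hd
    have hc := p.2.2
    rw [h0] at hc
    simp only [Finset.card_empty] at hc
    omega
  have hnonempty : ∀ I : ExtIdx (2*m) m, I.1.Nonempty := fun I =>
    Finset.card_pos.mp (by rw [I.2]; omega)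
  have key : ∀ p : ExtIdx (2*m) m × ExtIdx (2*m) m, Disjoint p.1.1 p.2.1 →
      idxEnc p.1.1 < idxEnc p.2.1 → α p.1 p.2 = gam α I₀ := by
    intro p hd henc
    rw [hcompl p.1 p.2 hd] at henc ⊢
    rw [← hgam p.1 (le_of_lt henc)]
    exact gam_const α hm3 hQ p.1 I₀
  unfold quadOfCoeff divSq
  rw [Finset.mul_sum]
  set F2 : Finset (ExtIdx (2*m) m × ExtIdx (2*m) m) := Finset.univ.filter
    (fun p => Disjoint p.1.1 p.2.1 ∧ idxEnc p.1.1 < idxEnc p.2.1) with hF2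
  have hsub : F2 ⊆ Finset.univ.filter
      (fun p : ExtIdx (2*m) m × ExtIdx (2*m) m => idxEnc p.1.1 ≤ idxEnc p.2.1) := by
    intro p hp
    simp only [hF2, Finset.mem_filter, Finset.mem_univ, true_and] at hp ⊢
    exact le_of_lt hp.2
  have hvan : ∀ p ∈ Finset.univ.filter
      (fun p : ExtIdx (2*m) m × ExtIdx (2*m) m => idxEnc p.1.1 ≤ idxEnc p.2.1),
      p ∉ F2 → α p.1 p.2 * y p.1 * y p.2 = 0 := by
    intro p hp hp2
    simp only [Finset.mem_filter, Finset.mem_univ, true_and] at hp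
    simp only [hF2, Finset.mem_filter, Finset.mem_univ, true_and, not_and] at hp2
    by_cases hd : Disjoint p.1.1 p.2.1
    · have hnl : ¬ idxEnc p.1.1 < idxEnc p.2.1 := hp2 hd
      have heq : p.1 = p.2 := Subtype.ext (idxEnc_injective (le_antisymm hp (not_lt.mp hnl)))
      rw [heq, hdiag p.2, zero_mul, zero_mul]
    · rw [hP2 p.1 p.2 hp hd, zero_mul, zero_mul]
  rw [← Finset.sum_subset hsub hvan]
  have hsummand : ∀ p ∈ F2, α p.1 p.2 * y p.1 * y p.2 = gam α I₀ * (y p.1 * y p.2) := by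
    intro p hp
    simp only [hF2, Finset.mem_filter, Finset.mem_univ, true_and] at hp
    rw [key p hp.1 hp.2, mul_assoc]
  rw [Finset.sum_congr rfl hsummand]
  have hminne : ∀ p : ExtIdx (2*m) m × ExtIdx (2*m) m, Disjoint p.1.1 p.2.1 →
      p.1.1.min ≠ p.2.1.min := fun p hd =>
    min_ne_of_disjoint hd (hnonempty p.1) (hnonempty p.2)
  have hencne : ∀ p : ExtIdx (2*m) m × ExtIdx (2*m) m, Disjoint p.1.1 p.2.1 →
      idxEnc p.1.1 ≠ idxEnc p.2.1 := fun p hd h => hne12 p hd (idxEnc_injective h)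
  refine Finset.sum_nbij' (i := fun p : ExtIdx (2*m) m × ExtIdx (2*m) m =>
      if p.1.1.min < p.2.1.min then p else p.swap)
    (j := fun p : ExtIdx (2*m) m × ExtIdx (2*m) m =>
      if idxEnc p.1.1 < idxEnc p.2.1 then p else p.swap) ?_ ?_ ?_ ?_ ?_
  · intro p hp
    simp only [hF2, Finset.mem_filter, Finset.mem_univ, true_and] at hp
    by_cases hlt : p.1.1.min < p.2.1.min
    · rw [if_pos hlt]
      simp only [Finset.mem_filter, Finset.mem_univ, true_and]
      exact ⟨hp.1, hlt⟩
    · rw [if_neg hlt]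
      simp only [Finset.mem_filter, Finset.mem_univ, true_and, Prod.fst_swap,
        Prod.snd_swap]
      exact ⟨hp.1.symm, lt_of_le_of_ne (not_lt.mp hlt) (hminne p hp.1).symm⟩
  · intro p hp
    simp only [Finset.mem_filter, Finset.mem_univ, true_and] at hp
    by_cases hlt : idxEnc p.1.1 < idxEnc p.2.1
    · rw [if_pos hlt]
      simp only [hF2, Finset.mem_filter, Finset.mem_univ, true_and]
      exact ⟨hp.1, hlt⟩
    · rw [if_neg hlt]
      simp only [hF2, Finset.mem_filter, Finset.mem_univ, true_and, Prod.fst_swap,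
        Prod.snd_swap]
      exact ⟨hp.1.symm, lt_of_le_of_ne (not_lt.mp hlt) (hencne p hp.1).symm⟩
  · intro p hp
    simp only [hF2, Finset.mem_filter, Finset.mem_univ, true_and] at hp
    by_cases hlt : p.1.1.min < p.2.1.min
    · rw [if_pos hlt, if_pos hp.2]
    · rw [if_neg hlt]
      have hn : ¬ idxEnc p.swap.1.1 < idxEnc p.swap.2.1 := by
        simp only [Prod.fst_swap, Prod.snd_swap]
        exact not_lt.mpr (le_of_lt hp.2)
      rw [if_neg hn, Prod.swap_swap]
  · intro p hp
    simp only [Finset.mem_filter, Finset.mem_univ, true_and] at hp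
    by_cases hlt : idxEnc p.1.1 < idxEnc p.2.1
    · rw [if_pos hlt, if_pos hp.2]
    · rw [if_neg hlt]
      have hn : ¬ p.swap.1.1.min < p.swap.2.1.min := by
        simp only [Prod.fst_swap, Prod.snd_swap]
        exact not_lt.mpr (le_of_lt hp.2)
      rw [if_neg hn, Prod.swap_swap]
  · intro p hp
    by_cases hlt : p.1.1.min < p.2.1.min
    · rw [if_pos hlt]
    · rw [if_neg hlt]
      simp only [Prod.fst_swap, Prod.snd_swap]
      rw [mul_comm (y p.1)]
end

section
/- Let k be a field of characteristic 2, m ≥ 3 odd, and V a k-vector space of dimension 2m. The divided-square quadratic form on Λ^m V is well-defined independently of the choice of basis: if e_1,…,e_{2m} and f_1,…,f_{2m} are two bases of V inducing the same identification Λ^{2m} V ≅ k, then the formulas Q_e and Q_f defined by Q(Σ x_I e_I) = Σ_{I,J disjoint, min I < min J} x_I x_J agree as quadratic forms on Λ^m V. -/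
/-- The `m`-th compound (exterior power) action of a matrix `g` on the coordinates of
`Λ^m V`: `(g·x)_I = ∑_J det(g_{I,J}) x_J`, where `g_{I,J}` is the submatrix of `g` with
rows `I` and columns `J` (listed in increasing order). -/
def compoundAct {k : Type*} [Field k] {N m : ℕ} (g : Matrix (Fin N) (Fin N) k)
    (x : ExtIdx N m → k) : ExtIdx N m → k :=
  fun I => ∑ J : ExtIdx N m,
    (g.submatrix (fun a : Fin m => ((I.1.orderIsoOfFin I.2 a : I.1) : Fin N))
        (fun a : Fin m => ((J.1.orderIsoOfFin J.2 a : J.1) : Fin N))).det * x J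

/-!
In characteristic two the determinant equals the permanent, so the generalized Laplace expansion
along `m` rows holds without signs: for the `m × m` minors `Δ_{K,J}` of `g`, the sum
`∑_K Δ_{K,J} Δ_{Kᶜ,J'}` is `det g` if `J' = Jᶜ` and `0` otherwise, the latter because the corresponding sum over bijections has two equal columns and
cancels in pairs.

Since `Q(y) = ∑_{0 ∈ K} y_K y_{Kᶜ}`, the form `Q(g·x)` has coefficients
`c_{J,J'} = ∑_{0 ∈ K} Δ_{K,J} Δ_{Kᶜ,J'}`. Laplace expansion gives
`c_{J,J'} + c_{J',J} = [J' = Jᶜ] det g`, and `c_{J,J} = 0` once `m ≥ 2`, by the same cancellation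
with the position of row `0` held fixed. A quadratic form in characteristic two is determined by
its polar form and its diagonal, so `Q(g·x)` depends on `g` only through `det g`, and `g = 1`
gives `Q(x)`.
-/

open Finset Equiv

theorem Matrix.sum_equiv_prod_eq_permanent {R α β : Type*} [CommSemiring R] [Fintype α]
    [DecidableEq α] [Fintype β] [DecidableEq β] (M : Matrix β β R) (F : α ≃ β) :
    ∑ e : α ≃ β, ∏ t, M (e t) (F t) = M.permanent := by
  rw [Matrix.permanent, ← Equiv.sum_comp (F.symm.equivCongr (Equiv.refl β))]
  exact sum_congr rfl fun σ _ => Equiv.prod_comp F fun s => M (σ s) s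

section CharTwo

variable {R : Type*} [CommRing R] [CharP R 2]

theorem Matrix.det_eq_permanent_of_charTwo {n : Type*} [DecidableEq n] [Fintype n]
    (M : Matrix n n R) : M.det = M.permanent := by
  rw [Matrix.det_apply, Matrix.permanent]
  refine sum_congr rfl fun σ _ => ?_
  rcases Int.units_eq_one_or (Perm.sign σ) with h | h <;>
    simp [h, Units.smul_def, CharTwo.neg_eq]

theorem Matrix.sum_equiv_prod_eq_zero_of_swap_mem {α β γ : Type*} [Fintype α] [DecidableEq α]
    (M : Matrix β γ R) {F : α → γ} {t₁ t₂ : α} (hne : t₁ ≠ t₂) (hF : F t₁ = F t₂)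
    {S : Finset (α ≃ β)} (hS : ∀ e ∈ S, (Equiv.swap t₁ t₂).trans e ∈ S) :
    ∑ e ∈ S, ∏ t, M (e t) (F t) = 0 := by
  have hF_swap : ∀ t, F (Equiv.swap t₁ t₂ t) = F t := fun t => by
    rw [swap_apply_def]; split_ifs <;> simp_all
  refine sum_involution (fun e _ => (Equiv.swap t₁ t₂).trans e) (fun e _ => ?_)
    (fun e _ _ h => hne ?_) hS (fun e _ => ?_)
  · have : ∏ t, M (e (Equiv.swap t₁ t₂ t)) (F t) = ∏ t, M (e t) (F t) := by
      simpa only [hF_swap] using Equiv.prod_comp (Equiv.swap t₁ t₂) fun t => M (e t) (F t)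
    simp only [trans_apply, this, CharTwo.add_self_eq_zero]
  · simpa using e.injective (DFunLike.congr_fun h t₂)
  · ext t; simp [swap_apply_self]

theorem sum_sum_mul_eq_zero_of_symm {ι : Type*} [Fintype ι] {d : ι → ι → R}
    (hsymm : ∀ i j, d i j = d j i) (hdiag : ∀ i, d i i = 0) (x : ι → R) :
    ∑ i, ∑ j, d i j * (x i * x j) = 0 := by
  rw [← sum_product']
  refine sum_involution (fun p _ => p.swap) (fun p _ => ?_) (fun p _ hp h => hp ?_)
    (fun p _ => mem_univ _) (fun p _ => p.swap_swap)
  · simp only [Prod.fst_swap, Prod.snd_swap, hsymm p.2, mul_comm (x p.2),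
      CharTwo.add_self_eq_zero]
  · rw [show p.2 = p.1 from congrArg Prod.fst h, hdiag, zero_mul]

end CharTwo

namespace ExtIdx

variable {N m : ℕ}

def enum (J : ExtIdx N m) (a : Fin m) : Fin N := J.1.orderIsoOfFin J.2 a

theorem enum_mem (J : ExtIdx N m) (a : Fin m) : J.enum a ∈ J.1 :=
  (J.1.orderIsoOfFin J.2 a).2

theorem enum_injective (J : ExtIdx N m) : Function.Injective J.enum := fun _ _ h =>
  (J.1.orderIsoOfFin J.2).injective (Subtype.ext h)

theorem exists_enum_eq {J : ExtIdx N m} {c : Fin N} (hc : c ∈ J.1) : ∃ a, J.enum a = c := by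
  obtain ⟨a, ha⟩ := (J.1.orderIsoOfFin J.2).surjective ⟨c, hc⟩
  exact ⟨a, congrArg Subtype.val ha⟩

def minor {R : Type*} [CommRing R] (g : Matrix (Fin N) (Fin N) R) (K J : ExtIdx N m) : R :=
  (g.submatrix K.enum J.enum).det

def leftImage {β : Type*} (e : Fin m ⊕ β ≃ Fin N) : ExtIdx N m :=
  ⟨univ.map (Function.Embedding.inl.trans e.toEmbedding), by simp⟩

theorem mem_leftImage {β : Type*} {e : Fin m ⊕ β ≃ Fin N} {c : Fin N} :
    c ∈ (leftImage e).1 ↔ ∃ a, e (.inl a) = c := by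
  simp [leftImage]

theorem minor_one_self {R : Type*} [CommRing R] (I : ExtIdx N m) :
    minor (1 : Matrix (Fin N) (Fin N) R) I I = 1 := by
  rw [minor, Matrix.submatrix_one _ I.enum_injective, Matrix.det_one]

theorem minor_one_of_ne {R : Type*} [CommRing R] {I J : ExtIdx N m}
    (h : I ≠ J) : minor (1 : Matrix (Fin N) (Fin N) R) I J = 0 := by
  obtain ⟨c, hcI, hcJ⟩ := not_subset.1 fun hsub =>
    h (Subtype.ext (eq_of_subset_of_card_le hsub (by rw [I.2, J.2])))
  obtain ⟨a, rfl⟩ := exists_enum_eq hcI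
  refine Matrix.det_eq_zero_of_row_eq_zero a fun b => Matrix.one_apply_ne ?_
  rintro h
  exact hcJ (h ▸ J.enum_mem b)

def compl (J : ExtIdx (2 * m) m) : ExtIdx (2 * m) m :=
  ⟨J.1ᶜ, by rw [card_compl, J.2, Fintype.card_fin]; omega⟩

theorem mem_compl {J : ExtIdx (2 * m) m} {c : Fin (2 * m)} : c ∈ (compl J).1 ↔ c ∉ J.1 :=
  Finset.mem_compl

theorem compl_involutive : Function.Involutive (compl (m := m)) := fun J =>
  Subtype.ext (compl_compl J.1)

theorem eq_compl_of_disjoint {J J' : ExtIdx (2 * m) m} (h : Disjoint J.1 J'.1) :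
    J' = compl J := by
  refine Subtype.ext (eq_of_subset_of_card_le (fun c hc => ?_) ?_)
  · exact Finset.mem_compl.2 fun hcJ => disjoint_left.1 h hcJ hc
  · rw [(compl J).2, J'.2]

theorem min_lt_min_compl_iff [NeZero (2 * m)] (J : ExtIdx (2 * m) m) :
    J.1.min < (compl J).1.min ↔ 0 ∈ J.1 := by
  by_cases h0 : 0 ∈ J.1
  · refine iff_of_true ((min_le h0).trans_lt ?_) h0
    obtain ⟨b, hb⟩ := min_of_nonempty (card_pos.1 (by
      rw [(compl J).2]; exact Nat.pos_of_ne_zero (right_ne_zero_of_mul (NeZero.ne (2 * m)))))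
    rw [hb, WithTop.coe_lt_coe, Fin.pos_iff_ne_zero]
    rintro rfl
    exact mem_compl.1 (mem_of_min hb) h0
  · refine iff_of_false (not_lt.2 ((min_le (mem_compl.2 h0)).trans ?_)) h0
    exact Finset.le_min fun b _ => WithTop.coe_le_coe.2 (Fin.zero_le b)

def sumComplEquiv (K : ExtIdx (2 * m) m) : Fin m ⊕ Fin m ≃ Fin (2 * m) :=
  (sumCongr (K.1.orderIsoOfFin K.2).toEquiv
    (((compl K).1.orderIsoOfFin (compl K).2).toEquiv.trans
      (subtypeEquivRight fun _ => Finset.mem_compl))).trans (sumCompl (· ∈ K.1))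

theorem sumComplEquiv_inl (K : ExtIdx (2 * m) m) (a : Fin m) :
    K.sumComplEquiv (.inl a) = K.enum a := rfl

theorem sum_elim_enum_compl (J : ExtIdx (2 * m) m) :
    Sum.elim J.enum (compl J).enum = J.sumComplEquiv := by
  ext (a | a) <;> rfl

theorem leftImage_eq_of_forall_mem {β : Type*} {e : Fin m ⊕ β ≃ Fin N} {K : ExtIdx N m}
    (h : ∀ a, e (.inl a) ∈ K.1) : leftImage e = K := by
  refine Subtype.ext (eq_of_subset_of_card_le (fun c hc => ?_) ?_)
  · obtain ⟨a, rfl⟩ := mem_leftImage.1 hc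
    exact h a
  · rw [K.2, (leftImage e).2]

theorem exists_sumCongr_trans_eq {K : ExtIdx (2 * m) m} {e : Fin m ⊕ Fin m ≃ Fin (2 * m)}
    (he : leftImage e = K) : ∃ σ τ : Perm (Fin m), (sumCongr σ τ).trans K.sumComplEquiv = e := by
  have hmaps : Set.MapsTo (e.trans K.sumComplEquiv.symm) (Set.range .inl) (Set.range .inl) := by
    rintro _ ⟨a, rfl⟩
    obtain ⟨b, hb⟩ := exists_enum_eq (he ▸ mem_leftImage.2 ⟨a, rfl⟩ : e (.inl a) ∈ K.1)
    exact ⟨b, by rw [trans_apply, eq_symm_apply, ← hb, sumComplEquiv_inl]⟩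
  obtain ⟨⟨σ, τ⟩, h⟩ := Perm.mem_sumCongrHom_range_of_perm_mapsTo_inl hmaps
  exact ⟨σ, τ, (trans_cancel_right _ _ _).2 h⟩

section CharTwo

variable {R : Type*} [CommRing R] [CharP R 2]

theorem minor_mul_minor_compl (g : Matrix (Fin (2 * m)) (Fin (2 * m)) R)
    (K J J' : ExtIdx (2 * m) m) :
    minor g K J * minor g (compl K) J' =
      ∑ e ∈ univ.filter (fun e => leftImage e = K), ∏ t, g (e t) (Sum.elim J.enum J'.enum t) := by
  rw [minor, minor, Matrix.det_eq_permanent_of_charTwo, Matrix.det_eq_permanent_of_charTwo,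
    Matrix.permanent, Matrix.permanent, sum_mul_sum, ← sum_product']
  refine sum_bij (fun p _ => (sumCongr p.1 p.2).trans K.sumComplEquiv) (fun p _ => ?_)
    (fun p _ q _ h => ?_) (fun e he => ?_) (fun p _ => ?_)
  · exact mem_filter.2 ⟨mem_univ _, leftImage_eq_of_forall_mem fun a => enum_mem K (p.1 a)⟩
  · rw [trans_cancel_right, trans_assoc, self_trans_symm, trans_refl] at h
    exact Perm.sumCongrHom_injective h
  · obtain ⟨σ, τ, h⟩ := exists_sumCongr_trans_eq (mem_filter.1 he).2
    exact ⟨(σ, τ), mem_univ _, h⟩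
  · rw [Fintype.prod_sum_type]
    rfl

theorem sum_minor_mul_minor_compl (g : Matrix (Fin (2 * m)) (Fin (2 * m)) R)
    (S : Finset (ExtIdx (2 * m) m)) (J J' : ExtIdx (2 * m) m) :
    ∑ K ∈ S, minor g K J * minor g (compl K) J' =
      ∑ e ∈ univ.filter (fun e => leftImage e ∈ S), ∏ t, g (e t) (Sum.elim J.enum J'.enum t) := by
  simp_rw [minor_mul_minor_compl]
  exact sum_fiberwise_eq_sum_filter _ _ _ _

theorem sum_equiv_prod_enum (g : Matrix (Fin (2 * m)) (Fin (2 * m)) R) (J J' : ExtIdx (2 * m) m) :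
    ∑ e : Fin m ⊕ Fin m ≃ Fin (2 * m), ∏ t, g (e t) (Sum.elim J.enum J'.enum t) =
      if J' = compl J then g.det else 0 := by
  split_ifs with h
  · rw [h, sum_elim_enum_compl, Matrix.sum_equiv_prod_eq_permanent,
      Matrix.det_eq_permanent_of_charTwo]
  · obtain ⟨c, hc⟩ := not_disjoint_iff_nonempty_inter.1 (mt eq_compl_of_disjoint h)
    obtain ⟨a, ha⟩ := exists_enum_eq (mem_inter.1 hc).1
    obtain ⟨b, hb⟩ := exists_enum_eq (mem_inter.1 hc).2
    exact Matrix.sum_equiv_prod_eq_zero_of_swap_mem g Sum.inl_ne_inr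
      (by simp [ha, hb] : Sum.elim J.enum J'.enum (.inl a) = Sum.elim J.enum J'.enum (.inr b))
      fun _ _ => mem_univ _

end CharTwo

end ExtIdx

open ExtIdx

section Coeff

variable {R : Type*} [CommRing R] [CharP R 2] {m : ℕ} [NeZero (2 * m)]

def divSqCoeff (g : Matrix (Fin (2 * m)) (Fin (2 * m)) R) (J J' : ExtIdx (2 * m) m) : R :=
  ∑ K ∈ univ.filter (fun K : ExtIdx (2 * m) m => 0 ∈ K.1), minor g K J * minor g (compl K) J'

theorem divSqCoeff_add_swap (g : Matrix (Fin (2 * m)) (Fin (2 * m)) R) (J J' : ExtIdx (2 * m) m) :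
    divSqCoeff g J J' + divSqCoeff g J' J = if J' = compl J then g.det else 0 := by
  have hswap : divSqCoeff g J' J =
      ∑ K ∈ univ.filter (fun K : ExtIdx (2 * m) m => 0 ∉ K.1),
        minor g K J * minor g (compl K) J' := by
    refine sum_nbij' compl compl (fun K hK => ?_) (fun K hK => ?_)
      (fun K _ => compl_involutive K) (fun K _ => compl_involutive K) (fun K _ => ?_)
    · simpa [mem_compl] using hK
    · simpa [mem_compl] using hK
    · rw [compl_involutive K, mul_comm]
  rw [divSqCoeff, hswap, sum_filter_add_sum_filter_not, ← sum_equiv_prod_enum,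
    sum_minor_mul_minor_compl, filter_true_of_mem fun _ _ => mem_univ _]

theorem divSqCoeff_self (hm : 2 ≤ m) (g : Matrix (Fin (2 * m)) (Fin (2 * m)) R)
    (J : ExtIdx (2 * m) m) : divSqCoeff g J J = 0 := by
  rw [divSqCoeff, sum_minor_mul_minor_compl, ← sum_fiberwise _ (fun e => e.symm 0)]
  refine sum_eq_zero fun t _ => ?_
  have : Nontrivial (Fin m) := Fin.nontrivial_iff_two_le.2 hm
  obtain ⟨b, hb⟩ := exists_ne (Sum.elim id id t)
  have hl : Sum.inl b ≠ t := by rintro rfl; exact hb rfl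
  have hr : Sum.inr b ≠ t := by rintro rfl; exact hb rfl
  refine Matrix.sum_equiv_prod_eq_zero_of_swap_mem g (t₁ := .inl b) (t₂ := .inr b)
    Sum.inl_ne_inr rfl fun e he => ?_
  obtain ⟨he_mem, he_t⟩ := mem_filter.1 he
  have hfix : ((Equiv.swap (.inl b) (.inr b)).trans e).symm 0 = e.symm 0 := by
    rw [symm_trans_apply, symm_swap, he_t, swap_apply_of_ne_of_ne hl.symm hr.symm]
  refine mem_filter.2 ⟨?_, hfix.trans he_t⟩
  simpa only [mem_filter, mem_univ, true_and, mem_leftImage, ← eq_symm_apply, hfix] using he_mem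

end Coeff

theorem divSq_eq_sum_mem_zero {k : Type*} [Field k] {m : ℕ} [NeZero (2 * m)]
    (y : ExtIdx (2 * m) m → k) :
    divSq y = ∑ J ∈ univ.filter (fun J : ExtIdx (2 * m) m => 0 ∈ J.1), y J * y (compl J) := by
  have hpairs : univ.filter (fun p : ExtIdx (2 * m) m × ExtIdx (2 * m) m =>
        Disjoint p.1.1 p.2.1 ∧ p.1.1.min < p.2.1.min) =
      (univ.filter (fun J : ExtIdx (2 * m) m => 0 ∈ J.1)).image fun J => (J, compl J) := by
    ext ⟨J, J'⟩
    simp only [mem_filter, mem_univ, true_and, mem_image, Prod.mk.injEq]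
    constructor
    · rintro ⟨hd, hlt⟩
      obtain rfl := eq_compl_of_disjoint hd
      exact ⟨J, (min_lt_min_compl_iff J).1 hlt, rfl, rfl⟩
    · rintro ⟨K, hK, rfl, rfl⟩
      exact ⟨disjoint_compl_right, (min_lt_min_compl_iff K).2 hK⟩
  rw [divSq, hpairs, sum_image fun _ _ _ _ h => congrArg Prod.fst h]

theorem compoundAct_apply {k : Type*} [Field k] {N m : ℕ} (g : Matrix (Fin N) (Fin N) k)
    (x : ExtIdx N m → k) (I : ExtIdx N m) : compoundAct g x I = ∑ J, minor g I J * x J :=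
  rfl

theorem divSq_compoundAct {k : Type*} [Field k] {m : ℕ} [NeZero (2 * m)]
    (g : Matrix (Fin (2 * m)) (Fin (2 * m)) k) (x : ExtIdx (2 * m) m → k) :
    divSq (compoundAct g x) = ∑ J, ∑ J', divSqCoeff g J J' * (x J * x J') := by
  simp only [divSq_eq_sum_mem_zero, compoundAct_apply, sum_mul_sum]
  simp only [divSqCoeff, sum_mul]
  rw [sum_comm]
  refine sum_congr rfl fun J _ => ?_
  rw [sum_comm]
  exact sum_congr rfl fun J' _ => sum_congr rfl fun K _ => by ring

theorem compoundAct_one {k : Type*} [Field k] {N m : ℕ} (x : ExtIdx N m → k) :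
    compoundAct 1 x = x := by
  funext I
  rw [compoundAct_apply, Fintype.sum_eq_single I fun J hJ => by
    rw [minor_one_of_ne (Ne.symm hJ), zero_mul], minor_one_self, one_mul]

theorem divSq_compoundAct_eq_of_det_eq {k : Type*} [Field k] [CharP k 2] {m : ℕ} (hm : 2 ≤ m)
    {g h : Matrix (Fin (2 * m)) (Fin (2 * m)) k} (hdet : g.det = h.det)
    (x : ExtIdx (2 * m) m → k) :
    divSq (compoundAct g x) = divSq (compoundAct h x) := by
  have : NeZero (2 * m) := ⟨by omega⟩
  rw [divSq_compoundAct, divSq_compoundAct, ← sub_eq_zero, ← sum_sub_distrib]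
  simp_rw [← sum_sub_distrib, ← sub_mul]
  refine sum_sum_mul_eq_zero_of_symm (fun J J' => ?_) (fun J => ?_) x
  · have hg := divSqCoeff_add_swap g J J'
    rw [hdet, ← divSqCoeff_add_swap h J J'] at hg
    linear_combination hg + (divSqCoeff h J' J - divSqCoeff g J' J) * CharTwo.two_eq_zero (R := k)
  · rw [divSqCoeff_self hm, divSqCoeff_self hm, sub_zero]

theorem stmt4_general {k : Type*} [Field k] [CharP k 2] (m : ℕ) (hm3 : 3 ≤ m)
    (g : Matrix (Fin (2 * m)) (Fin (2 * m)) k) (hdet : g.det = 1)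
    (x : ExtIdx (2 * m) m → k) :
    divSq (compoundAct g x) = divSq x := by
  rw [divSq_compoundAct_eq_of_det_eq (by omega) (hdet.trans Matrix.det_one.symm), compoundAct_one]

/-- (char 2, `m ≥ 3` odd, `dim V = 2m`.)  The divided-square quadratic
form on `Λ^m V` is well defined independently of the basis:  a change of basis of `V`
inducing the same identification `Λ^{2m} V ≅ k` is given by a matrix `g` with
`det g = 1`, under whose compound action on the coordinates of `Λ^m V` the divided
square is invariant. -/
theorem stmt4 {k : Type*} [Field k] [CharP k 2] (m : ℕ) (hm : Odd m) (hm3 : 3 ≤ m)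
    (g : Matrix (Fin (2 * m)) (Fin (2 * m)) k) (hdet : g.det = 1)
    (x : ExtIdx (2 * m) m → k) :
    divSq (compoundAct g x) = divSq x :=
  stmt4_general m hm3 g hdet x
end

section
/- Let k be a field of characteristic 2, m ≥ 3 odd, and V a k-vector space of dimension 2m. Then for each nonzero ξ ∈ V, the subspace ξ ∧ Λ^{m−1}V ⊆ Λ^m V has dimension binom(2m−1, m−1) = (1/2)·dim(Λ^m V), and the divided-square quadratic form Q vanishes identically on it; hence ξ ∧ Λ^{m−1}V is a Lagrangian subspace of (Λ^m V, Q). -/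
open Module

namespace Stmt5Aux
variable {k : Type*} [Field k] {N : ℕ}

def extC (j : ℕ) (u : ExtIdx N j → k) : Finset (Fin N) → k :=
  fun s => if h : s.card = j then u ⟨s, h⟩ else 0

lemma extC_eq (j : ℕ) (u : ExtIdx N j → k) (I : ExtIdx N j) : extC j u I.1 = u I := by
  simp [extC, I.2]

lemma extC_add (j : ℕ) (u v : ExtIdx N j → k) (s : Finset (Fin N)) :
    extC j (u + v) s = extC j u s + extC j v s := by
  unfold extC; split <;> simp

lemma extC_smul (j : ℕ) (c : k) (u : ExtIdx N j → k) (s : Finset (Fin N)) :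
    extC j (c • u) s = c * extC j u s := by
  unfold extC; split <;> simp

def dmap (ξ : Fin N → k) (j : ℕ) : (ExtIdx N j → k) →ₗ[k] (ExtIdx N (j+1) → k) where
  toFun w := fun I => ∑ i ∈ I.1, ξ i * extC j w (I.1.erase i)
  map_add' w₁ w₂ := by
    funext I
    simp [extC_add, mul_add, Finset.sum_add_distrib]
  map_smul' c w := by
    funext I
    simp only [Pi.smul_apply, smul_eq_mul, RingHom.id_apply, extC_smul, Finset.mul_sum]
    exact Finset.sum_congr rfl fun a ha => by ring

def cmap (f : Fin N → k) (j : ℕ) : (ExtIdx N (j+1) → k) →ₗ[k] (ExtIdx N j → k) where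
  toFun u := fun J => ∑ a ∈ Finset.univ \ J.1, f a * extC (j+1) u (insert a J.1)
  map_add' u₁ u₂ := by
    funext J
    simp [extC_add, mul_add, Finset.sum_add_distrib]
  map_smul' c u := by
    funext J
    simp only [Pi.smul_apply, smul_eq_mul, RingHom.id_apply, extC_smul, Finset.mul_sum]
    exact Finset.sum_congr rfl fun a ha => by ring

lemma dmap_apply (ξ : Fin N → k) (j : ℕ) (w : ExtIdx N j → k) (I : ExtIdx N (j+1)) :
    dmap ξ j w I = ∑ i ∈ I.1, ξ i * extC j w (I.1.erase i) := rfl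

lemma cmap_apply (f : Fin N → k) (j : ℕ) (u : ExtIdx N (j+1) → k) (J : ExtIdx N j) :
    cmap f j u J = ∑ a ∈ Finset.univ \ J.1, f a * extC (j+1) u (insert a J.1) := rfl

lemma extC_dmap (ξ : Fin N → k) (j : ℕ) (w : ExtIdx N j → k) (s : Finset (Fin N))
    (hs : s.card = j + 1) :
    extC (j+1) (dmap ξ j w) s = ∑ i ∈ s, ξ i * extC j w (s.erase i) := by
  simp only [extC, dif_pos hs]; rfl

lemma extC_cmap (f : Fin N → k) (j : ℕ) (u : ExtIdx N (j+1) → k) (s : Finset (Fin N))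
    (hs : s.card = j) :
    extC j (cmap f j u) s = ∑ a ∈ Finset.univ \ s, f a * extC (j+1) u (insert a s) := by
  simp only [extC, dif_pos hs]; rfl

lemma sdiff_erase_eq (i : Fin N) (K : Finset (Fin N)) (hi : i ∈ K) :
    Finset.univ \ K.erase i = insert i (Finset.univ \ K) := by
  ext a
  by_cases ha : a = i <;> simp [ha, hi, Finset.mem_erase]

/-- Cartan homotopy identity in characteristic 2. -/
lemma cartan [CharP k 2] (ξ f : Fin N → k) (hf : ∑ i, f i * ξ i = 1) (j : ℕ)
    (u : ExtIdx N (j+1) → k) :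
    dmap ξ j (cmap f j u) + cmap f (j+1) (dmap ξ (j+1) u) = u := by
  funext K
  have hKc : (K.1).card = j + 1 := K.2
  -- expand T1
  have T1 : dmap ξ j (cmap f j u) K
      = ∑ i ∈ K.1, ξ i * f i * u K
        + ∑ i ∈ K.1, ∑ a ∈ Finset.univ \ K.1, ξ i * f a * extC (j+1) u (insert a (K.1.erase i)) := by
    rw [dmap_apply]
    rw [← Finset.sum_add_distrib]
    refine Finset.sum_congr rfl fun i hi => ?_
    rw [extC_cmap f j u _ (by rw [Finset.card_erase_of_mem hi, hKc]; rfl),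
        sdiff_erase_eq i K.1 hi,
        Finset.sum_insert (by simp [hi])]
    rw [Finset.insert_erase hi, extC_eq]
    rw [mul_add, Finset.mul_sum]
    congr 1
    · ring
    · exact Finset.sum_congr rfl fun a ha => by ring
  -- expand T2
  have T2 : cmap f (j+1) (dmap ξ (j+1) u) K
      = ∑ a ∈ Finset.univ \ K.1, f a * ξ a * u K
        + ∑ a ∈ Finset.univ \ K.1, ∑ i ∈ K.1, f a * ξ i * extC (j+1) u (insert a (K.1.erase i)) := by
    rw [cmap_apply]
    rw [← Finset.sum_add_distrib]
    refine Finset.sum_congr rfl fun a ha => ?_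
    have haK : a ∉ K.1 := by simpa using ha
    rw [extC_dmap ξ (j+1) u _ (by rw [Finset.card_insert_of_notMem haK, hKc])]
    rw [Finset.sum_insert haK, Finset.erase_insert haK, extC_eq]
    rw [mul_add, Finset.mul_sum]
    congr 1
    · ring
    · refine Finset.sum_congr rfl fun i hi => ?_
      rw [Finset.erase_insert_of_ne (fun h => haK (by rw [h]; exact hi)) ]
      ring
  have hcross : ∑ i ∈ K.1, ∑ a ∈ Finset.univ \ K.1, ξ i * f a * extC (j+1) u (insert a (K.1.erase i))
      + ∑ a ∈ Finset.univ \ K.1, ∑ i ∈ K.1, f a * ξ i * extC (j+1) u (insert a (K.1.erase i)) = 0 := by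
    rw [Finset.sum_comm]
    rw [← Finset.sum_add_distrib]
    refine Finset.sum_eq_zero fun a ha => ?_
    rw [← Finset.sum_add_distrib]
    refine Finset.sum_eq_zero fun i hi => ?_
    rw [show ξ i * f a = f a * ξ i from mul_comm _ _]
    exact CharTwo.add_self_eq_zero _
  have hdiag : ∑ i ∈ K.1, ξ i * f i * u K + ∑ a ∈ Finset.univ \ K.1, f a * ξ a * u K = u K := by
    have : ∑ a ∈ Finset.univ \ K.1, f a * ξ a * u K + ∑ i ∈ K.1, f i * ξ i * u K
        = ∑ i : Fin N, f i * ξ i * u K := Finset.sum_sdiff (Finset.subset_univ _)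
    calc ∑ i ∈ K.1, ξ i * f i * u K + ∑ a ∈ Finset.univ \ K.1, f a * ξ a * u K
        = ∑ a ∈ Finset.univ \ K.1, f a * ξ a * u K + ∑ i ∈ K.1, f i * ξ i * u K := by
          rw [add_comm]; congr 1; exact Finset.sum_congr rfl fun i _ => by ring
      _ = ∑ i : Fin N, f i * ξ i * u K := this
      _ = u K := by rw [← Finset.sum_mul, hf, one_mul]
  calc (dmap ξ j (cmap f j u) + cmap f (j+1) (dmap ξ (j+1) u)) K
      = dmap ξ j (cmap f j u) K + cmap f (j+1) (dmap ξ (j+1) u) K := rfl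
    _ = u K := by rw [T1, T2]; rw [show ∀ a b c d : k, a + b + (c + d) = (a + c) + (b + d) from fun a b c d => by ring]
                  rw [hcross, add_zero, hdiag]


lemma dd_eq_zero [CharP k 2] (ξ : Fin N → k) (j : ℕ) (w : ExtIdx N j → k) :
    dmap ξ (j+1) (dmap ξ j w) = 0 := by
  funext K
  rw [dmap_apply]
  have : ∀ i ∈ K.1, ξ i * extC (j+1) (dmap ξ j w) (K.1.erase i)
      = ∑ l ∈ K.1.erase i, ξ i * (ξ l * extC j w ((K.1.erase i).erase l)) := by
    intro i hi
    rw [extC_dmap ξ j w _ (by rw [Finset.card_erase_of_mem hi, K.2]; rfl), Finset.mul_sum]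
  rw [Finset.sum_congr rfl this, Finset.sum_sigma' K.1 (fun i => K.1.erase i)
    (fun i l => ξ i * (ξ l * extC j w ((K.1.erase i).erase l)))]
  refine Finset.sum_involution (fun p _ => ⟨p.2, p.1⟩) ?_ ?_ ?_ ?_
  · rintro ⟨i, l⟩ hp
    simp only
    rw [Finset.erase_right_comm]
    rw [show ξ l * (ξ i * extC j w ((K.1.erase l).erase i)) =
        ξ i * (ξ l * extC j w ((K.1.erase l).erase i)) from by ring]
    exact CharTwo.add_self_eq_zero _
  · rintro ⟨i, l⟩ hp _
    have hil : i ≠ l := by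
      simp only [Finset.mem_sigma, Finset.mem_erase] at hp
      exact fun h => hp.2.1 h.symm
    intro h
    exact hil (congrArg Sigma.fst h).symm
  · rintro ⟨i, l⟩ hp
    simp only [Finset.mem_sigma, Finset.mem_erase] at hp ⊢
    exact ⟨hp.2.2, fun h => hp.2.1 h.symm, hp.1⟩
  · rintro ⟨i, l⟩ hp
    rfl

lemma exists_dual [CharP k 2] (ξ : Fin N → k) (hξ : ξ ≠ 0) :
    ∃ f : Fin N → k, ∑ i, f i * ξ i = 1 := by
  have : ∃ i0, ξ i0 ≠ 0 := by
    by_contra h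
    push_neg at h
    exact hξ (funext fun i => h i)
  obtain ⟨i0, hi0⟩ := this
  refine ⟨fun i => if i = i0 then (ξ i0)⁻¹ else 0, ?_⟩
  rw [Finset.sum_eq_single i0]
  · simp [inv_mul_cancel₀ hi0]
  · intro b _ hb; simp [hb]
  · simp

lemma range_eq_ker [CharP k 2] (ξ : Fin N → k) (hξ : ξ ≠ 0) (j : ℕ) :
    LinearMap.range (dmap (k := k) (N := N) ξ j) = LinearMap.ker (dmap ξ (j+1)) := by
  obtain ⟨f, hf⟩ := exists_dual ξ hξ
  ext u
  constructor
  · rintro ⟨w, rfl⟩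
    exact dd_eq_zero ξ j w
  · intro hu
    rw [LinearMap.mem_ker] at hu
    refine ⟨cmap f j u, ?_⟩
    have := cartan ξ f hf j u
    rw [hu, map_zero, add_zero] at this
    exact this

lemma N_pos (ξ : Fin N → k) (hξ : ξ ≠ 0) : 1 ≤ N := by
  by_contra h
  push_neg at h
  interval_cases N
  exact hξ (funext fun i => absurd i.2 (by omega))

lemma finrank_fun (j : ℕ) : finrank k (ExtIdx N j → k) = N.choose j := by
  rw [Module.finrank_pi, Fintype.card_finset_len, Fintype.card_fin]

lemma finrank_range_dmap [CharP k 2] (ξ : Fin N → k) (hξ : ξ ≠ 0) :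
    ∀ j, finrank k (LinearMap.range (dmap (k := k) (N := N) ξ j)) = (N-1).choose j := by
  have hN := N_pos ξ hξ
  obtain ⟨M, rfl⟩ : ∃ M, N = M + 1 := ⟨N - 1, by omega⟩
  intro j
  induction j with
  | zero =>
    have hinj : Function.Injective (dmap (k := k) ξ 0) := by
      have : ∃ i0, ξ i0 ≠ 0 := by
        by_contra h; push_neg at h; exact hξ (funext fun i => h i)
      obtain ⟨i0, hi0⟩ := this
      rw [← LinearMap.ker_eq_bot]
      rw [Submodule.eq_bot_iff]
      intro w hw
      rw [LinearMap.mem_ker] at hw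
      have h1 : dmap ξ 0 w ⟨{i0}, Finset.card_singleton i0⟩ = 0 := by rw [hw]; rfl
      rw [dmap_apply, Finset.sum_singleton, Finset.erase_singleton] at h1
      have h2 : extC 0 w (∅ : Finset (Fin (M+1))) = 0 := by
        rcases mul_eq_zero.1 h1 with h | h
        · exact absurd h hi0
        · exact h
      funext s
      have hs : s.1 = ∅ := Finset.card_eq_zero.1 s.2
      have : w ⟨∅, by simp⟩ = 0 := by
        simpa [extC] using h2
      calc w s = w ⟨∅, by simp⟩ := by congr 1; exact Subtype.ext hs
        _ = 0 := this
    rw [LinearMap.finrank_range_of_inj hinj, finrank_fun]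
    simp
  | succ j ih =>
    have hrn := LinearMap.finrank_range_add_finrank_ker (dmap (k := k) ξ (j+1))
    rw [← range_eq_ker ξ hξ j, ih, finrank_fun] at hrn
    simp only [Nat.add_sub_cancel, Nat.succ_eq_add_one] at *
    rw [Nat.choose_succ_succ] at hrn
    rw [show M.choose j.succ = M.choose (j+1) from rfl] at *
    omega

/-- the involution used to show `divSq` vanishes on the image of wedging. -/
def invo {N m : ℕ} (q : Σ _ : ExtIdx N m × ExtIdx N m, Fin N × Fin N) :
    Σ _ : ExtIdx N m × ExtIdx N m, Fin N × Fin N :=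
  if h : (insert q.2.1 (q.1.2.1.erase q.2.2)).card = m ∧
         (insert q.2.2 (q.1.1.1.erase q.2.1)).card = m then
    if (insert q.2.1 (q.1.2.1.erase q.2.2)).min < (insert q.2.2 (q.1.1.1.erase q.2.1)).min then
      ⟨(⟨_, h.1⟩, ⟨_, h.2⟩), (q.2.1, q.2.2)⟩
    else ⟨(⟨_, h.2⟩, ⟨_, h.1⟩), (q.2.2, q.2.1)⟩
  else q

lemma invo_pos {N m : ℕ} (I J : ExtIdx N m) (i j : Fin N)
    (h : (insert i (J.1.erase j)).card = m ∧ (insert j (I.1.erase i)).card = m)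
    (hlt : (insert i (J.1.erase j)).min < (insert j (I.1.erase i)).min) :
    invo ⟨(I, J), (i, j)⟩ = ⟨(⟨_, h.1⟩, ⟨_, h.2⟩), (i, j)⟩ := by
  unfold invo; rw [dif_pos h, if_pos hlt]

lemma invo_neg {N m : ℕ} (I J : ExtIdx N m) (i j : Fin N)
    (h : (insert i (J.1.erase j)).card = m ∧ (insert j (I.1.erase i)).card = m)
    (hlt : ¬ (insert i (J.1.erase j)).min < (insert j (I.1.erase i)).min) :
    invo ⟨(I, J), (i, j)⟩ = ⟨(⟨_, h.2⟩, ⟨_, h.1⟩), (j, i)⟩ := by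
  unfold invo; rw [dif_pos h, if_neg hlt]

lemma divSq_dmap [CharP k 2] (ξ : Fin N → k) (n : ℕ) (hn : 1 ≤ n) (w : ExtIdx N n → k) :
    divSq (dmap ξ n w) = 0 := by
  classical
  unfold divSq
  set P0 := Finset.univ.filter
      (fun p : ExtIdx N (n+1) × ExtIdx N (n+1) =>
        Disjoint p.1.1 p.2.1 ∧ p.1.1.min < p.2.1.min) with hP0
  have expand : ∀ p ∈ P0, (dmap ξ n w) p.1 * (dmap ξ n w) p.2
      = ∑ q ∈ p.1.1 ×ˢ p.2.1,
          (ξ q.1 * extC n w (p.1.1.erase q.1)) * (ξ q.2 * extC n w (p.2.1.erase q.2)) := by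
    intro p _
    rw [dmap_apply, dmap_apply, Finset.sum_mul_sum, ← Finset.sum_product']
  rw [Finset.sum_congr rfl expand,
      Finset.sum_sigma' P0 (fun p => p.1.1 ×ˢ p.2.1)
        (fun p q => (ξ q.1 * extC n w (p.1.1.erase q.1)) * (ξ q.2 * extC n w (p.2.1.erase q.2)))]
  have facts : ∀ q ∈ P0.sigma (fun p => p.1.1 ×ˢ p.2.1),
      Disjoint q.1.1.1 q.1.2.1 ∧ q.1.1.1.min < q.1.2.1.min ∧ q.2.1 ∈ q.1.1.1 ∧ q.2.2 ∈ q.1.2.1 := by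
    intro q hq
    rw [Finset.mem_sigma, hP0, Finset.mem_filter, Finset.mem_product] at hq
    exact ⟨hq.1.2.1, hq.1.2.2, hq.2.1, hq.2.2⟩
  refine Finset.sum_involution (fun q _ => invo q) ?_ ?_ ?_ ?_
  · -- cancellation
    rintro ⟨⟨I, J⟩, i, j⟩ hq
    obtain ⟨hd, hmin, hi, hj⟩ := facts _ hq
    simp only at hd hmin hi hj
    have hiJ : i ∉ J.1 := fun h => (Finset.disjoint_left.1 hd hi) h
    have hjI : j ∉ I.1 := fun h => (Finset.disjoint_left.1 hd h) hj
    have hiJe : i ∉ J.1.erase j := fun h => hiJ (Finset.mem_of_mem_erase h)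
    have hjIe : j ∉ I.1.erase i := fun h => hjI (Finset.mem_of_mem_erase h)
    have hcA : (insert i (J.1.erase j)).card = n + 1 := by
      rw [Finset.card_insert_of_notMem hiJe, Finset.card_erase_of_mem hj, J.2]; omega
    have hcB : (insert j (I.1.erase i)).card = n + 1 := by
      rw [Finset.card_insert_of_notMem hjIe, Finset.card_erase_of_mem hi, I.2]; omega
    have hAe : (insert i (J.1.erase j)).erase i = J.1.erase j := Finset.erase_insert hiJe
    have hBe : (insert j (I.1.erase i)).erase j = I.1.erase i := Finset.erase_insert hjIe
    simp only
    by_cases hlt : (insert i (J.1.erase j)).min < (insert j (I.1.erase i)).min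
    · rw [invo_pos I J i j ⟨hcA, hcB⟩ hlt]
      simp only [hAe, hBe]
      rw [show (ξ i * extC n w (J.1.erase j)) * (ξ j * extC n w (I.1.erase i))
          = (ξ i * extC n w (I.1.erase i)) * (ξ j * extC n w (J.1.erase j)) from by ring]
      exact CharTwo.add_self_eq_zero _
    · rw [invo_neg I J i j ⟨hcA, hcB⟩ hlt]
      simp only [hAe, hBe]
      rw [show (ξ j * extC n w (I.1.erase i)) * (ξ i * extC n w (J.1.erase j))
          = (ξ i * extC n w (I.1.erase i)) * (ξ j * extC n w (J.1.erase j)) from by ring]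
      exact CharTwo.add_self_eq_zero _
  · -- no fixed points
    rintro ⟨⟨I, J⟩, i, j⟩ hq _
    obtain ⟨hd, hmin, hi, hj⟩ := facts _ hq
    simp only at hd hmin hi hj
    have hiJ : i ∉ J.1 := fun h => (Finset.disjoint_left.1 hd hi) h
    have hjI : j ∉ I.1 := fun h => (Finset.disjoint_left.1 hd h) hj
    have hij : i ≠ j := fun h => hiJ (h ▸ hj)
    have hiJe : i ∉ J.1.erase j := fun h => hiJ (Finset.mem_of_mem_erase h)
    have hjIe : j ∉ I.1.erase i := fun h => hjI (Finset.mem_of_mem_erase h)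
    have hcA : (insert i (J.1.erase j)).card = n + 1 := by
      rw [Finset.card_insert_of_notMem hiJe, Finset.card_erase_of_mem hj, J.2]; omega
    have hcB : (insert j (I.1.erase i)).card = n + 1 := by
      rw [Finset.card_insert_of_notMem hjIe, Finset.card_erase_of_mem hi, I.2]; omega
    by_cases hlt : (insert i (J.1.erase j)).min < (insert j (I.1.erase i)).min
    · rw [invo_pos I J i j ⟨hcA, hcB⟩ hlt]
      intro h
      have hA : insert i (J.1.erase j) = I.1 := by
        have := congrArg (fun q => q.1.1.1) h
        simpa using this
      have hne : (J.1.erase j).Nonempty := by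
        rw [← Finset.card_pos, Finset.card_erase_of_mem hj, J.2]; omega
      obtain ⟨x, hx⟩ := hne
      have hxJ : x ∈ J.1 := Finset.mem_of_mem_erase hx
      have hxI : x ∈ I.1 := by
        rw [← hA]; exact Finset.mem_insert_of_mem hx
      exact (Finset.disjoint_left.1 hd hxI) hxJ
    · rw [invo_neg I J i j ⟨hcA, hcB⟩ hlt]
      intro h
      have : j = i := by
        have := congrArg (fun q => q.2.1) h
        simpa using this
      exact hij this.symm
  · -- invo maps into the set
    rintro ⟨⟨I, J⟩, i, j⟩ hq
    obtain ⟨hd, hmin, hi, hj⟩ := facts _ hq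
    simp only at hd hmin hi hj
    have hiJ : i ∉ J.1 := fun h => (Finset.disjoint_left.1 hd hi) h
    have hjI : j ∉ I.1 := fun h => (Finset.disjoint_left.1 hd h) hj
    have hij : i ≠ j := fun h => hiJ (h ▸ hj)
    have hiJe : i ∉ J.1.erase j := fun h => hiJ (Finset.mem_of_mem_erase h)
    have hjIe : j ∉ I.1.erase i := fun h => hjI (Finset.mem_of_mem_erase h)
    have hcA : (insert i (J.1.erase j)).card = n + 1 := by
      rw [Finset.card_insert_of_notMem hiJe, Finset.card_erase_of_mem hj, J.2]; omega
    have hcB : (insert j (I.1.erase i)).card = n + 1 := by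
      rw [Finset.card_insert_of_notMem hjIe, Finset.card_erase_of_mem hi, I.2]; omega
    have hdAB : Disjoint (insert i (J.1.erase j)) (insert j (I.1.erase i)) := by
      rw [Finset.disjoint_left]
      intro x hxA hxB
      rcases Finset.mem_insert.1 hxA with rfl | hxA'
      · rcases Finset.mem_insert.1 hxB with h | h
        · exact hij h
        · exact (Finset.mem_erase.1 h).1 rfl
      · rcases Finset.mem_insert.1 hxB with rfl | hxB'
        · exact (Finset.mem_erase.1 hxA').1 rfl
        · exact (Finset.disjoint_left.1 hd (Finset.mem_of_mem_erase hxB'))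
            (Finset.mem_of_mem_erase hxA')
    have hminne : (insert i (J.1.erase j)).min ≠ (insert j (I.1.erase i)).min := by
      intro hmm
      obtain ⟨a, ha⟩ := Finset.min_of_mem (Finset.mem_insert_self i (J.1.erase j))
      have haA := Finset.mem_of_min ha
      have haB := Finset.mem_of_min (hmm ▸ ha)
      exact (Finset.disjoint_left.1 hdAB haA) haB
    by_cases hlt : (insert i (J.1.erase j)).min < (insert j (I.1.erase i)).min
    · rw [invo_pos I J i j ⟨hcA, hcB⟩ hlt]
      rw [Finset.mem_sigma, hP0, Finset.mem_filter, Finset.mem_product]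
      exact ⟨⟨Finset.mem_univ _, hdAB, hlt⟩,
        Finset.mem_insert_self _ _, Finset.mem_insert_self _ _⟩
    · rw [invo_neg I J i j ⟨hcA, hcB⟩ hlt]
      rw [Finset.mem_sigma, hP0, Finset.mem_filter, Finset.mem_product]
      refine ⟨⟨Finset.mem_univ _, hdAB.symm, ?_⟩,
        Finset.mem_insert_self _ _, Finset.mem_insert_self _ _⟩
      exact lt_of_le_of_ne (not_lt.1 hlt) (Ne.symm hminne)
  · -- involution squared is identity
    rintro ⟨⟨I, J⟩, i, j⟩ hq
    obtain ⟨hd, hmin, hi, hj⟩ := facts _ hq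
    simp only at hd hmin hi hj
    have hiJ : i ∉ J.1 := fun h => (Finset.disjoint_left.1 hd hi) h
    have hjI : j ∉ I.1 := fun h => (Finset.disjoint_left.1 hd h) hj
    have hiJe : i ∉ J.1.erase j := fun h => hiJ (Finset.mem_of_mem_erase h)
    have hjIe : j ∉ I.1.erase i := fun h => hjI (Finset.mem_of_mem_erase h)
    have hcA : (insert i (J.1.erase j)).card = n + 1 := by
      rw [Finset.card_insert_of_notMem hiJe, Finset.card_erase_of_mem hj, J.2]; omega
    have hcB : (insert j (I.1.erase i)).card = n + 1 := by
      rw [Finset.card_insert_of_notMem hjIe, Finset.card_erase_of_mem hi, I.2]; omega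
    have hAe : (insert i (J.1.erase j)).erase i = J.1.erase j := Finset.erase_insert hiJe
    have hBe : (insert j (I.1.erase i)).erase j = I.1.erase i := Finset.erase_insert hjIe
    have recI : insert i ((insert j (I.1.erase i)).erase j) = I.1 := by
      rw [hBe, Finset.insert_erase hi]
    have recJ : insert j ((insert i (J.1.erase j)).erase i) = J.1 := by
      rw [hAe, Finset.insert_erase hj]
    by_cases hlt : (insert i (J.1.erase j)).min < (insert j (I.1.erase i)).min
    · rw [invo_pos I J i j ⟨hcA, hcB⟩ hlt]
      rw [invo_pos ⟨_, hcA⟩ ⟨_, hcB⟩ i j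
        (by constructor <;> simp only [recI, recJ] <;> [exact I.2; exact J.2])
        (by simp only [recI, recJ]; exact hmin)]
      exact Sigma.ext (Prod.ext (Subtype.ext recI) (Subtype.ext recJ)) (HEq.refl _)
    · rw [invo_neg I J i j ⟨hcA, hcB⟩ hlt]
      rw [invo_neg ⟨_, hcB⟩ ⟨_, hcA⟩ j i
        (by constructor <;> simp only [recI, recJ] <;> [exact J.2; exact I.2])
        (by simp only [recI, recJ]; exact not_lt.2 (le_of_lt hmin))]
      exact Sigma.ext (Prod.ext (Subtype.ext recI) (Subtype.ext recJ)) (HEq.refl _)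

end Stmt5Aux

open Stmt5Aux in
lemma choose_half (m : ℕ) (hm : 1 ≤ m) :
    2 * Nat.choose (2 * m - 1) (m - 1) = Nat.choose (2 * m) m := by
  obtain ⟨t, rfl⟩ : ∃ t, m = t + 1 := ⟨m - 1, by omega⟩
  rw [show 2 * (t + 1) - 1 = 2*t+1 from by omega, show t + 1 - 1 = t from rfl,
      show 2 * (t + 1) = (2*t+1) + 1 from by omega, Nat.choose_succ_succ]
  have h2 : (2*t+1).choose (t+1) = (2*t+1).choose t := by
    rw [← Nat.choose_symm (show t+1 ≤ 2*t+1 by omega), show 2*t+1 - (t+1) = t from by omega]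
  rw [show (2*t+1).choose t.succ = (2*t+1).choose (t+1) from rfl] at *
  omega

/-- (char 2, `m ≥ 3` odd, `dim V = 2m`.)  For every nonzero `ξ ∈ V`,
the subspace `ξ ∧ Λ^{m-1}V ⊆ Λ^m V` has dimension `C(2m-1, m-1)`, which is half of
`dim Λ^m V = C(2m, m)`, and the divided-square form `Q` vanishes identically on it:
it is a Lagrangian subspace of `(Λ^m V, Q)`. -/
theorem stmt5 {k : Type*} [Field k] [CharP k 2] (m : ℕ) (hm : Odd m) (hm3 : 3 ≤ m)
    (ξ : Fin (2 * m) → k) (hξ : ξ ≠ 0) :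
    finrank k ↥(Submodule.span k
        (Set.range (fun w : ExtIdx (2 * m) (m - 1) → k => wedgeVec m ξ w)))
      = Nat.choose (2 * m - 1) (m - 1) ∧
    2 * Nat.choose (2 * m - 1) (m - 1) = Nat.choose (2 * m) m ∧
    finrank k (ExtIdx (2 * m) m → k) = Nat.choose (2 * m) m ∧
    ∀ u ∈ Submodule.span k
        (Set.range (fun w : ExtIdx (2 * m) (m - 1) → k => wedgeVec m ξ w)),
      divSq u = 0 := by
  obtain ⟨n, rfl⟩ : ∃ n, m = n + 1 := ⟨m - 1, by omega⟩
  have hn : 1 ≤ n := by omega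
  have hw : (fun w : ExtIdx (2 * (n+1)) ((n+1) - 1) → k => wedgeVec (n+1) ξ w)
      = ⇑(Stmt5Aux.dmap ξ n) := by
    funext w
    funext I
    rw [Stmt5Aux.dmap_apply]
    show ∑ i ∈ I.1.attach, ξ i.1 * w ⟨I.1.erase i.1, _⟩ = _
    rw [show (fun i : {x // x ∈ I.1} => ξ i.1 * w ⟨I.1.erase i.1, by
          rw [Finset.card_erase_of_mem i.2, I.2]⟩)
        = fun i : {x // x ∈ I.1} => ξ i.1 * Stmt5Aux.extC n w (I.1.erase i.1) from ?_]
    · exact Finset.sum_attach I.1 (fun i => ξ i * Stmt5Aux.extC n w (I.1.erase i))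
    · funext i
      congr 1
      rw [Stmt5Aux.extC, dif_pos (by rw [Finset.card_erase_of_mem i.2, I.2]; rfl)]
  have hspan : Submodule.span k
      (Set.range (fun w : ExtIdx (2 * (n+1)) ((n+1) - 1) → k => wedgeVec (n+1) ξ w))
      = LinearMap.range (Stmt5Aux.dmap ξ n) := by
    rw [hw]
    exact Submodule.span_eq_of_le _ (by rintro x ⟨w, rfl⟩; exact ⟨w, rfl⟩)
      (by rintro x ⟨w, rfl⟩; exact Submodule.subset_span ⟨w, rfl⟩)
  refine ⟨?_, choose_half (n+1) (by omega), Stmt5Aux.finrank_fun _, ?_⟩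
  · rw [hspan, Stmt5Aux.finrank_range_dmap ξ hξ n]
    rfl
  · intro u hu
    rw [hspan] at hu
    obtain ⟨w, rfl⟩ := hu
    exact Stmt5Aux.divSq_dmap ξ n hn w
end

section
/- Let V̄ be a 7-dimensional vector space over a field k and α ∈ Λ^3 V̄. If α = α' ∧ α'' with α' ∈ V̄ and α'' ∈ Λ^2 V̄ indecomposable (α'' not a pure wedge of two vectors modulo α'), then the multiplication map m_α : V̄ → Λ^4 V̄, v ↦ α ∧ v, has rank 6; if α = α_1 ∧ α_2 ∧ α_3 is totally decomposable with α_1, α_2, α_3 linearly independent, then m_α has rank 4. -/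
open Module ExteriorAlgebra

/-! Rank-nullity reduces both claims to computing the kernel of `v ↦ α ∧ v`.

For `α = a₁ ∧ ⋯ ∧ aₙ` with independent `aᵢ`, `α ∧ x` is the wedge of the family `a₁, …, aₙ, x`,
which vanishes exactly when that family is dependent, so the kernel is `span {aᵢ}`.

For `α = a ∧ ω` with `ω ∈ Λ²`, suppose `α ∧ x = 0` with `x ∉ ⟨a⟩`. Contracting `x ∧ a ∧ ω = 0`
with a form `φ` such that `φ x = 1`, `φ a = 0` gives `a ∧ ω = -(x ∧ a ∧ w)` for the vector
`w = φ ⌋ ω`, whence `a ∧ ω ∧ ω = -(x ∧ a ∧ ω) ∧ w = 0`. So the kernel is `⟨a⟩` when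
`a ∧ ω ∧ ω ≠ 0`. -/

namespace ExteriorAlgebra

section CommRing

variable {R M : Type*} [CommRing R] [AddCommGroup M] [Module R M]

theorem ι_mul_mem_exteriorPower_succ (m : M) {n : ℕ} {x : ExteriorAlgebra R M}
    (hx : x ∈ ⋀[R]^n M) : ι R m * x ∈ ⋀[R]^(n + 1) M := by
  rw [exteriorPower, pow_succ']
  exact Submodule.mul_mem_mul (LinearMap.mem_range_self _ m) hx

theorem ι_mul_ι_eq_neg (x y : M) : ι R x * ι R y = -(ι R y * ι R x) :=
  (neg_eq_of_add_eq_zero_right (ι_add_mul_swap y x)).symm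

theorem mul_ι_eq_neg_one_pow_smul (m : M) :
    ∀ {n : ℕ} {x : ExteriorAlgebra R M}, x ∈ ⋀[R]^n M →
      x * ι R m = ((-1 : R) ^ n) • (ι R m * x)
  | 0, x, hx => by
    obtain ⟨r, rfl⟩ := Submodule.mem_one.mp (by simpa [exteriorPower] using hx)
    simp [Algebra.commutes]
  | n + 1, x, hx => by
    rw [exteriorPower, pow_succ'] at hx
    induction hx using Submodule.mul_induction_on' with
    | mem_mul_mem y hy z hz =>
      obtain ⟨u, rfl⟩ := hy
      rw [mul_assoc, mul_ι_eq_neg_one_pow_smul m hz, mul_smul_comm, ← mul_assoc,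
        ι_mul_ι_eq_neg, pow_succ, mul_neg_one, neg_smul, neg_mul, smul_neg, mul_assoc]
    | add y _ z _ hy hz => rw [add_mul, hy, hz, mul_add, smul_add]

theorem contractLeft_mem_exteriorPower (φ : Module.Dual R M) :
    ∀ {n : ℕ} {x : ExteriorAlgebra R M}, x ∈ ⋀[R]^(n + 1) M →
      CliffordAlgebra.contractLeft (Q := 0) φ x ∈ ⋀[R]^n M
  | 0, x, hx => by
    obtain ⟨m, rfl⟩ := (by simpa [exteriorPower] using hx : x ∈ LinearMap.range (ι R))
    rw [CliffordAlgebra.contractLeft_ι, exteriorPower, pow_zero]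
    exact Submodule.algebraMap_mem _
  | n + 1, x, hx => by
    rw [exteriorPower, pow_succ'] at hx
    induction hx using Submodule.mul_induction_on' with
    | mem_mul_mem y hy z hz =>
      obtain ⟨u, rfl⟩ := hy
      rw [CliffordAlgebra.contractLeft_ι_mul]
      exact Submodule.sub_mem _ (Submodule.smul_mem _ _ hz)
        (ι_mul_mem_exteriorPower_succ u (contractLeft_mem_exteriorPower φ hz))
    | add y _ z _ hy hz => rw [map_add]; exact Submodule.add_mem _ hy hz

end CommRing

section Field

variable {K E : Type*} [Field K] [AddCommGroup E] [Module K E]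

theorem ιMulti_eq_zero_iff {n : ℕ} {v : Fin n → E} :
    ιMulti K n v = 0 ↔ ¬LinearIndependent K v := by
  refine ⟨fun h hv => ?_, (ιMulti K n).map_linearDependent v⟩
  have := (exteriorPower.ιMulti_family_linearIndependent_field (n := n) hv).ne_zero
    (Set.powersetCard.ofFinEmbEquiv (RelEmbedding.refl (α := Fin n) (· ≤ ·)))
  rw [exteriorPower.ιMulti_family, Equiv.symm_apply_apply] at this
  exact this (Subtype.ext h)

theorem ker_mulLeft_ιMulti_comp_ι {n : ℕ} {v : Fin n → E} (hv : LinearIndependent K v) :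
    LinearMap.ker ((LinearMap.mulLeft K (ιMulti K n v)).comp (ι K)) =
      Submodule.span K (Set.range v) := by
  ext x
  have hsnoc : ιMulti K n v * ι K x = ιMulti K (n + 1) (Fin.snoc v x) := by
    rw [Fin.snoc_eq_append, ← ιMulti_mul_ιMulti]
    simp
  rw [LinearMap.mem_ker, LinearMap.comp_apply, LinearMap.mulLeft_apply, hsnoc,
    ιMulti_eq_zero_iff, linearIndependent_finSnoc]
  simp [hv]

theorem mem_span_singleton_of_ι_mul_mul_ι_eq_zero {a x : E} {ω : ExteriorAlgebra K E}
    (hω : ω ∈ ⋀[K]^2 E) (hA : ι K a * ω * ω ≠ 0) (hx : ι K a * ω * ι K x = 0) :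
    x ∈ K ∙ a := by
  by_contra hxa
  obtain ⟨φ, hφa, hφx⟩ := LinearMap.exists_extend_of_notMem (0 : (K ∙ a) →ₗ[K] K) hxa 1
  replace hφa : φ a = 0 := by
    simpa using LinearMap.congr_fun hφa ⟨a, Submodule.mem_span_singleton_self a⟩
  have hcomm (v : E) : ω * ι K v = ι K v * ω := by
    simpa using mul_ι_eq_neg_one_pow_smul v hω
  obtain ⟨w, hw⟩ : ∃ w, CliffordAlgebra.contractLeft (Q := 0) φ ω = ι K w := by
    simpa [exteriorPower, eq_comm] using contractLeft_mem_exteriorPower φ (n := 1) hω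
  have hx' : ι K x * (ι K a * ω) = 0 := by
    rw [mul_assoc, hcomm, ← mul_assoc, ι_mul_ι_eq_neg a x] at hx
    simpa [mul_assoc] using hx
  have haω : ι K a * ω = -(ι K x * (ι K a * ι K w)) :=
    eq_neg_of_add_eq_zero_left <| by
      simpa [CliffordAlgebra.contractLeft_ι_mul, hφx, hφa, hw] using
        congrArg (CliffordAlgebra.contractLeft (Q := 0) φ) hx'
  apply hA
  calc ι K a * ω * ω = -(ι K x * (ι K a * ι K w)) * ω := congrArg (· * ω) haω
    _ = -(ι K x * (ι K a * ω) * ι K w) := by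
      rw [neg_mul]; simp only [mul_assoc]; rw [← hcomm w]
    _ = 0 := by rw [hx', zero_mul, neg_zero]

theorem ker_mulLeft_ι_mul_comp_ι {a : E} {ω : ExteriorAlgebra K E}
    (hω : ω ∈ ⋀[K]^2 E) (hA : ι K a * ω * ω ≠ 0) :
    LinearMap.ker ((LinearMap.mulLeft K (ι K a * ω)).comp (ι K)) = K ∙ a := by
  refine le_antisymm (fun x hx => mem_span_singleton_of_ι_mul_mul_ι_eq_zero hω hA hx) ?_
  rw [Submodule.span_singleton_le_iff_mem, LinearMap.mem_ker, LinearMap.comp_apply,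
    LinearMap.mulLeft_apply, mul_assoc, mul_ι_eq_neg_one_pow_smul a hω, mul_smul_comm,
    ← mul_assoc, ι_sq_zero, zero_mul, smul_zero]

end Field

end ExteriorAlgebra

/-- Let `V̄` be `7`-dimensional over `k` and `α ∈ Λ³V̄`.  If
`α = α' ∧ α''` with `α' ∈ V̄` and `α'' ∈ Λ²V̄` indecomposable modulo `α'` (i.e.
`α' ∧ α'' ∧ α'' ≠ 0`, which says `α'' ∧ α'' ≠ 0` in `Λ⁴(V̄/⟨α'⟩)`), then the
multiplication map `m_α : V̄ → Λ⁴V̄`, `v ↦ α ∧ v`, has rank `6`; if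
`α = α₁ ∧ α₂ ∧ α₃` with `α₁, α₂, α₃` linearly independent, then `m_α` has rank `4`. -/
theorem stmt8 {k V : Type*} [Field k] [AddCommGroup V] [Module k V]
    [FiniteDimensional k V] (h7 : finrank k V = 7) :
    (∀ (a : V) (ω : ExteriorAlgebra k V), ω ∈ ⋀[k]^2 V →
      ι k a * ω * ω ≠ 0 →
      finrank k
        ↥(LinearMap.range ((LinearMap.mulLeft k (ι k a * ω)).comp (ι k))) = 6) ∧
    (∀ a b c : V, LinearIndependent k ![a, b, c] →
      finrank k
        ↥(LinearMap.range
            ((LinearMap.mulLeft k (ι k a * ι k b * ι k c)).comp (ι k))) = 4) := by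
  constructor
  · intro a ω hω hA
    have ha : a ≠ 0 := by rintro rfl; simp at hA
    have hrank := LinearMap.finrank_range_add_finrank_ker
      ((LinearMap.mulLeft k (ι k a * ω)).comp (ι k))
    rw [ker_mulLeft_ι_mul_comp_ι hω hA, finrank_span_singleton ha, h7] at hrank
    omega
  · intro a b c habc
    have hα : ι k a * ι k b * ι k c = ιMulti k 3 ![a, b, c] := by
      simp [ιMulti_apply, mul_assoc]
    have hrank := LinearMap.finrank_range_add_finrank_ker
      ((LinearMap.mulLeft k (ιMulti k 3 ![a, b, c])).comp (ι k))
    rw [ker_mulLeft_ιMulti_comp_ι habc, finrank_span_eq_card habc, h7, Fintype.card_fin] at hrank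
    rw [hα]
    omega
end

section
/- Let Δ be the 6-vertex minimal triangulation of RP^2 and k a field of characteristic 2. In Λ³V with V = k^6 (basis e_0,…,e_5) equipped with the divided-square quadratic form Q, the 10-dimensional subspace W spanned by the exterior monomials e_{013}, e_{014}, e_{023}, e_{025}, e_{045}, e_{124}, e_{125}, e_{135}, e_{234}, e_{345} (indexed by the facets of Δ) is a Lagrangian subspace: Q vanishes identically on W and dim W = 10 = (1/2)·dim Λ³V, since dim Λ³k^6 = 20. Concretely: no two of the ten listed 3-element index sets are disjoint (any two facets of Δ share a vertex), and hence Q(w) = 0 for every w ∈ W. -/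
open Module

/-- Coordinates of `Λ³V` for `V = k⁶`: indexed by 3-element subsets of `Fin 6`. -/
abbrev Idx63 := {s : Finset (Fin 6) // s.card = 3}

/-- The divided-square quadratic form on `Λ³k⁶` in characteristic 2:
`Q(∑ x_I e_I) = ∑_{I∩J=∅, min I < min J} x_I x_J`. -/
def divSq63 {k : Type*} [Field k] (x : Idx63 → k) : k :=
  ∑ p ∈ Finset.univ.filter
      (fun p : Idx63 × Idx63 => Disjoint p.1.1 p.2.1 ∧ p.1.1.min < p.2.1.min),
    x p.1 * x p.2

/-- The ten facets of the minimal triangulation `Δ` of `ℝP²`, as 3-element subsets of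
`{0,…,5}`. -/
def facets63 : Finset Idx63 :=
  {⟨{0, 1, 3}, by decide⟩, ⟨{0, 1, 4}, by decide⟩, ⟨{0, 2, 3}, by decide⟩,
   ⟨{0, 2, 5}, by decide⟩, ⟨{0, 4, 5}, by decide⟩, ⟨{1, 2, 4}, by decide⟩,
   ⟨{1, 2, 5}, by decide⟩, ⟨{1, 3, 5}, by decide⟩, ⟨{2, 3, 4}, by decide⟩,
   ⟨{3, 4, 5}, by decide⟩}

/-- The span `W ⊆ Λ³k⁶` of the exterior monomials `e_I` for `I` a facet of `Δ`. -/
def spanW (k : Type*) [Field k] : Submodule k (Idx63 → k) :=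
  Submodule.span k {x | ∃ I ∈ facets63, x = Pi.single I 1}

/-- (char 2.)  In `Λ³k⁶` (dimension 20) with the divided-square
quadratic form `Q`, the 10-dimensional subspace `W` spanned by the exterior monomials
indexed by the ten facets of the minimal triangulation of `ℝP²` is Lagrangian:  any two
of the ten triples intersect, so all cross terms vanish and `Q|_W ≡ 0`, and
`dim W = 10 = 20/2`. -/
theorem stmt18 (k : Type*) [Field k] [CharP k 2] :
    (∀ I ∈ facets63, ∀ J ∈ facets63, ¬ Disjoint I.1 J.1) ∧
    finrank k (Idx63 → k) = 20 ∧
    finrank k ↥(spanW k) = 10 ∧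
    ∀ w ∈ spanW k, divSq63 w = 0 := by

  have hfac : ∀ I ∈ facets63, ∀ J ∈ facets63, ¬ Disjoint I.1 J.1 := by decide
  have hsup : ∀ w ∈ spanW k, ∀ I, I ∉ facets63 → w I = 0 := by
    intro w hw
    induction hw using Submodule.span_induction with
    | mem x hx =>
      obtain ⟨I, hI, rfl⟩ := hx
      intro J hJ
      rw [Pi.single_apply]
      split
      · next h => exact absurd (h ▸ hI) hJ
      · rfl
    | zero => intro I _; rfl
    | add x y _ _ hx hy => intro I hI; simp [hx I hI, hy I hI]
    | smul c x _ hx => intro I hI; simp [hx I hI]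
  refine ⟨hfac, ?_, ?_, ?_⟩
  · rw [Module.finrank_pi]
    decide
  · have hli : LinearIndependent k
        (fun I : {I : Idx63 // I ∈ facets63} => (Pi.single I.1 1 : Idx63 → k)) := by
      have h0 : LinearIndependent k (fun i : Idx63 => (Pi.single i 1 : Idx63 → k)) := by
        have := (Pi.basisFun k Idx63).linearIndependent
        convert this using 1
        funext i
        simp [Pi.basisFun_apply]
      exact h0.comp (Subtype.val : {I : Idx63 // I ∈ facets63} → Idx63)
        Subtype.val_injective
    have hset : {x : Idx63 → k | ∃ I ∈ facets63, x = Pi.single I 1} =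
        Set.range (fun I : {I : Idx63 // I ∈ facets63} => (Pi.single I.1 1 : Idx63 → k)) := by
      ext x
      constructor
      · rintro ⟨I, hI, rfl⟩; exact ⟨⟨I, hI⟩, rfl⟩
      · rintro ⟨⟨I, hI⟩, rfl⟩; exact ⟨I, hI, rfl⟩
    rw [spanW, hset, finrank_span_eq_card hli, Fintype.card_coe]
    decide
  · intro w hw
    rw [divSq63]
    apply Finset.sum_eq_zero
    intro p hp
    simp only [Finset.mem_filter] at hp
    by_cases h1 : p.1 ∈ facets63
    · by_cases h2 : p.2 ∈ facets63
      · exact absurd hp.2.1 (hfac p.1 h1 p.2 h2)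
      · rw [hsup w hw p.2 h2, mul_zero]
    · rw [hsup w hw p.1 h1, zero_mul]
end
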